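/- arXiv:cs/0507025 — 8 statements merged into one kernel-verified Lean document; each statement's English description precedes it below -/
import Mathlib

section
/- Let m, n be positive integers, ξ_1,…,ξ_m points of a measurable space X, f : X → ℝ, and ω_1,…,ω_m nonnegative real weights with Σ_{i=1}^m ω_i = 1. Set R = Σ_{i=1}^m ⌊n ω_i⌋ and assume R < n, and define the residual weights ω̄_i = (n ω_i − ⌊n ω_i⌋)/(n − R). Let Ī^1,…,Ī^{n−R} be i.i.d. random indices with P(Ī^k = i) = ω̄_i. Then the residual resampling estimator is unbiased: E[ Σ_{i=1}^m (⌊n ω_i⌋/n) f(ξ_i) + (1/n) Σ_{k=1}^{n−R} f(ξ_{Ī^k}) ] = Σ_{i=1}^m ω_i f(ξ_i). -/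
/-!
By linearity of expectation each residual draw contributes its mean `∑ i, ω̄ i f(ξ i)`, and the
`n − R` draws together give `ξ i` the weight `(n − R) ω̄ i / n = ω i − ⌊n ω i⌋ / n`, which is exactly
what the deterministic part leaves missing.
-/

open MeasureTheory ProbabilityTheory Filter Finset

theorem integral_comp_eq_sum_measureReal_preimage {Ω ι E : Type*} [MeasurableSpace Ω]
    [Fintype ι] [MeasurableSpace ι] [MeasurableSingletonClass ι]
    [NormedAddCommGroup E] [NormedSpace ℝ E] [CompleteSpace E]
    {P : Measure Ω} [IsFiniteMeasure P] {I : Ω → ι} (hI : Measurable I) (g : ι → E) :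
    ∫ a, g (I a) ∂P = ∑ i, P.real (I ⁻¹' {i}) • g i := by
  rw [← integral_map hI.aemeasurable .of_discrete, integral_fintype (f := g) .of_finite]
  simp only [map_measureReal_apply hI (measurableSet_singleton _)]

theorem residual_resampling_unbiased_general
    {X : Type*} {Ω : Type*} [MeasurableSpace Ω]
    (P : Measure Ω) [IsProbabilityMeasure P]
    (m n : ℕ)
    (ξ : Fin m → X) (f : X → ℝ)
    (w : Fin m → ℝ)
    (R : ℕ) (hRn : R < n)
    (wbar : Fin m → ℝ)
    (hwbar : ∀ i, wbar i = ((n : ℝ) * w i - ⌊(n : ℝ) * w i⌋) / ((n : ℝ) - R))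
    (Ibar : Fin (n - R) → Ω → Fin m) (hImeas : ∀ k, Measurable (Ibar k))
    (hIlaw : ∀ k i, P {a | Ibar k a = i} = ENNReal.ofReal (wbar i)) :
    ∫ a, ((∑ i, ((⌊(n : ℝ) * w i⌋ : ℝ) / (n : ℝ)) * f (ξ i))
        + (1 / (n : ℝ)) * ∑ k, f (ξ (Ibar k a))) ∂P
      = ∑ i, w i * f (ξ i) := by
  have hn : (n : ℝ) ≠ 0 := by positivity [Nat.zero_lt_of_lt hRn]
  have hnR : ((n - R : ℕ) : ℝ) = n - R := Nat.cast_sub hRn.le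
  have hnR_pos : (0 : ℝ) < n - R := sub_pos.mpr (mod_cast hRn)
  have hwbar_nonneg : ∀ i, 0 ≤ wbar i := fun i => by
    rw [hwbar]
    exact div_nonneg (sub_nonneg.mpr (Int.floor_le _)) hnR_pos.le
  have hlaw : ∀ k i, P.real {a | Ibar k a = i} = wbar i := fun k i => by
    rw [measureReal_def, hIlaw, ENNReal.toReal_ofReal (hwbar_nonneg i)]
  have hint : ∀ k, Integrable (fun a => f (ξ (Ibar k a))) P := fun k =>
    (Integrable.of_finite (f := fun i => f (ξ i))).comp_measurable (hImeas k)
  have hmean : ∀ k, ∫ a, f (ξ (Ibar k a)) ∂P = ∑ i, wbar i * f (ξ i) := fun k => by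
    rw [integral_comp_eq_sum_measureReal_preimage (hImeas k) (fun i => f (ξ i))]
    exact Finset.sum_congr rfl fun i _ => by rw [← hlaw k i]; rfl
  rw [integral_add (integrable_const _) ((integrable_finsetSum _ fun k _ => hint k).const_mul _),
    integral_const, integral_const_mul, integral_finsetSum _ fun k _ => hint k]
  simp only [hmean, Finset.sum_const, Finset.card_univ, Fintype.card_fin, nsmul_eq_mul, hnR,
    probReal_univ, one_smul]
  rw [Finset.mul_sum, Finset.mul_sum, ← Finset.sum_add_distrib]
  refine Finset.sum_congr rfl fun i _ => ?_
  rw [hwbar i]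
  field_simp [hnR_pos.ne']
  ring

/-- unbiasedness of residual resampling.
With `R = ∑_i ⌊n w i⌋ < n`, residual weights `w̄ i = (n w i − ⌊n w i⌋)/(n − R)` and
i.i.d. residual indices `Ī k` with `P(Ī k = i) = w̄ i`, the residual resampling estimator
has expectation `∑_i w i f(ξ i)`. -/
theorem residual_resampling_unbiased
    {X : Type*} [MeasurableSpace X] {Ω : Type*} [MeasurableSpace Ω]
    (P : Measure Ω) [IsProbabilityMeasure P]
    (m n : ℕ) (hm : 0 < m) (hn : 0 < n)
    (ξ : Fin m → X) (f : X → ℝ)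
    (w : Fin m → ℝ) (hw : ∀ i, 0 ≤ w i) (hw1 : ∑ i, w i = 1)
    (R : ℕ) (hR : (R : ℤ) = ∑ i, ⌊(n : ℝ) * w i⌋) (hRn : R < n)
    (wbar : Fin m → ℝ)
    (hwbar : ∀ i, wbar i = ((n : ℝ) * w i - ⌊(n : ℝ) * w i⌋) / ((n : ℝ) - R))
    (Ibar : Fin (n - R) → Ω → Fin m) (hImeas : ∀ k, Measurable (Ibar k))
    (hIindep : iIndepFun Ibar P)
    (hIlaw : ∀ k i, P {a | Ibar k a = i} = ENNReal.ofReal (wbar i)) :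
    ∫ a, ((∑ i, ((⌊(n : ℝ) * w i⌋ : ℝ) / (n : ℝ)) * f (ξ i))
        + (1 / (n : ℝ)) * ∑ k, f (ξ (Ibar k a))) ∂P
      = ∑ i, w i * f (ξ i) :=
  residual_resampling_unbiased_general P m n ξ f w R hRn wbar hwbar Ibar hImeas hIlaw
end

section
/- Let m, n be positive integers, ξ_1,…,ξ_m points of a measurable space X, f : X → ℝ, and ω_1,…,ω_m nonnegative real weights with Σ_{i=1}^m ω_i = 1. Set R = Σ_{i=1}^m ⌊n ω_i⌋, assume R < n, define ω̄_i = (n ω_i − ⌊n ω_i⌋)/(n − R), and let Ī^1,…,Ī^{n−R} be i.i.d. random indices with P(Ī^k = i) = ω̄_i. Then Var[ Σ_{i=1}^m (⌊n ω_i⌋/n) f(ξ_i) + (1/n) Σ_{k=1}^{n−R} f(ξ_{Ī^k}) ] = (1/n) Σ_{i=1}^m ω_i f(ξ_i)² − Σ_{i=1}^m (⌊n ω_i⌋/n²) f(ξ_i)² − ((n − R)/n²) ( Σ_{i=1}^m ω̄_i f(ξ_i) )². -/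
/-! The deterministic part of the estimator is a constant, so all of its variance comes from
the `n - R` i.i.d. residual draws: it is `(n - R) / n²` times the variance of `f (ξ Ī)` under
the residual weights. Since `(n - R) ω̄ᵢ = n ωᵢ - ⌊n ωᵢ⌋`, the second moment of that draw
splits into the first two terms of the formula. -/

open MeasureTheory ProbabilityTheory Filter Finset

section RandomIndex

variable {Ω ι : Type*} [MeasurableSpace Ω] {P : Measure Ω}
  [Fintype ι] [MeasurableSpace ι] [DiscreteMeasurableSpace ι] {p : ι → ℝ}

lemma memLp_comp_of_finite [IsFiniteMeasure P] {I : Ω → ι} (hI : Measurable I)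
    (h : ι → ℝ) (q : ENNReal) : MemLp (fun a => h (I a)) q P :=
  MemLp.of_discrete.comp_of_map hI.aemeasurable

lemma integral_comp_eq_sum_of_measure_preimage_singleton [IsFiniteMeasure P] {I : Ω → ι}
    (hI : Measurable I) (hp : ∀ i, 0 ≤ p i)
    (hlaw : ∀ i, P {a | I a = i} = ENNReal.ofReal (p i)) (h : ι → ℝ) :
    ∫ a, h (I a) ∂P = ∑ i, p i * h i := by
  rw [← integral_map hI.aemeasurable .of_discrete, integral_fintype .of_finite]
  refine sum_congr rfl fun i _ => ?_
  rw [measureReal_def, Measure.map_apply hI (measurableSet_singleton i), smul_eq_mul,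
    show I ⁻¹' {i} = {a | I a = i} from rfl, hlaw i, ENNReal.toReal_ofReal (hp i)]

lemma variance_comp_eq_of_measure_preimage_singleton [IsProbabilityMeasure P] {I : Ω → ι}
    (hI : Measurable I) (hp : ∀ i, 0 ≤ p i)
    (hlaw : ∀ i, P {a | I a = i} = ENNReal.ofReal (p i)) (h : ι → ℝ) :
    variance (fun a => h (I a)) P = ∑ i, p i * h i ^ 2 - (∑ i, p i * h i) ^ 2 := by
  rw [variance_eq_sub (memLp_comp_of_finite hI h 2),
    ← integral_comp_eq_sum_of_measure_preimage_singleton hI hp hlaw,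
    ← integral_comp_eq_sum_of_measure_preimage_singleton hI hp hlaw]
  rfl

lemma variance_sum_comp_of_iIndepFun [IsProbabilityMeasure P] {κ : Type*} [Fintype κ]
    {I : κ → Ω → ι} (hI : ∀ k, Measurable (I k)) (hindep : iIndepFun I P)
    (hp : ∀ i, 0 ≤ p i) (hlaw : ∀ k i, P {a | I k a = i} = ENNReal.ofReal (p i)) (h : ι → ℝ) :
    variance (fun a => ∑ k, h (I k a)) P
      = Fintype.card κ * (∑ i, p i * h i ^ 2 - (∑ i, p i * h i) ^ 2) := by
  have hsum : (fun a => ∑ k, h (I k a)) = ∑ k, fun a => h (I k a) := by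
    ext a; simp only [Finset.sum_apply]
  rw [hsum, IndepFun.variance_sum (fun k _ => memLp_comp_of_finite (hI k) h 2)]
  · simp only [variance_comp_eq_of_measure_preimage_singleton (hI _) hp (hlaw _),
      sum_const, card_univ, nsmul_eq_mul]
  · intro k _ l _ hkl
    exact (hindep.indepFun hkl).comp .of_discrete .of_discrete

end RandomIndex

theorem residual_resampling_variance_general
    {X : Type*} {Ω : Type*} [MeasurableSpace Ω]
    (P : Measure Ω) [IsProbabilityMeasure P]
    (m n : ℕ)
    (ξ : Fin m → X) (f : X → ℝ)
    (w : Fin m → ℝ)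
    (R : ℕ) (hRn : R < n)
    (wbar : Fin m → ℝ)
    (hwbar : ∀ i, wbar i = ((n : ℝ) * w i - ⌊(n : ℝ) * w i⌋) / ((n : ℝ) - R))
    (Ibar : Fin (n - R) → Ω → Fin m) (hImeas : ∀ k, Measurable (Ibar k))
    (hIindep : iIndepFun Ibar P)
    (hIlaw : ∀ k i, P {a | Ibar k a = i} = ENNReal.ofReal (wbar i)) :
    variance (fun a => (∑ i, ((⌊(n : ℝ) * w i⌋ : ℝ) / (n : ℝ)) * f (ξ i))
        + (1 / (n : ℝ)) * ∑ k, f (ξ (Ibar k a))) P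
      = (1 / (n : ℝ)) * ∑ i, w i * f (ξ i) ^ 2
        - ∑ i, ((⌊(n : ℝ) * w i⌋ : ℝ) / (n : ℝ) ^ 2) * f (ξ i) ^ 2
        - (((n : ℝ) - R) / (n : ℝ) ^ 2) * (∑ i, wbar i * f (ξ i)) ^ 2 := by
  have hn : (0 : ℝ) < n := by exact_mod_cast (Nat.zero_le R).trans_lt hRn
  have hNR : (0 : ℝ) < n - R := sub_pos.2 (by exact_mod_cast hRn)
  have hwbar_nonneg : ∀ i, 0 ≤ wbar i := fun i => by
    rw [hwbar i]; exact div_nonneg (sub_nonneg.2 (Int.floor_le _)) hNR.le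
  have hmass : ∀ i, ((n : ℝ) - R) * wbar i = n * w i - ⌊(n : ℝ) * w i⌋ := fun i => by
    rw [hwbar i]; field_simp
  have hsecond : ((n : ℝ) - R) * ∑ i, wbar i * f (ξ i) ^ 2
      = n * ∑ i, w i * f (ξ i) ^ 2 - ∑ i, ⌊(n : ℝ) * w i⌋ * f (ξ i) ^ 2 := by
    simp only [mul_sum, ← sum_sub_distrib, ← mul_assoc, hmass, sub_mul]
  rw [variance_const_add (by fun_prop), variance_const_mul,
    variance_sum_comp_of_iIndepFun hImeas hIindep hwbar_nonneg hIlaw (fun i => f (ξ i)),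
    Fintype.card_fin, Nat.cast_sub hRn.le, mul_sub (_ - _), hsecond]
  simp only [div_mul_eq_mul_div, ← sum_div]
  field_simp

/-- variance of the residual resampling estimator.
With `R = ∑_i ⌊n w i⌋ < n`, residual weights `w̄ i = (n w i − ⌊n w i⌋)/(n − R)` and
i.i.d. residual indices `Ī k` with `P(Ī k = i) = w̄ i`,
`Var[∑_i (⌊n w i⌋/n) f(ξ i) + (1/n) ∑_k f(ξ_{Ī k})]
  = (1/n) ∑_i w i f(ξ i)² − ∑_i (⌊n w i⌋/n²) f(ξ i)² − ((n−R)/n²)(∑_i w̄ i f(ξ i))²`. -/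
theorem residual_resampling_variance
    {X : Type*} [MeasurableSpace X] {Ω : Type*} [MeasurableSpace Ω]
    (P : Measure Ω) [IsProbabilityMeasure P]
    (m n : ℕ) (hm : 0 < m) (hn : 0 < n)
    (ξ : Fin m → X) (f : X → ℝ)
    (w : Fin m → ℝ) (hw : ∀ i, 0 ≤ w i) (hw1 : ∑ i, w i = 1)
    (R : ℕ) (hR : (R : ℤ) = ∑ i, ⌊(n : ℝ) * w i⌋) (hRn : R < n)
    (wbar : Fin m → ℝ)
    (hwbar : ∀ i, wbar i = ((n : ℝ) * w i - ⌊(n : ℝ) * w i⌋) / ((n : ℝ) - R))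
    (Ibar : Fin (n - R) → Ω → Fin m) (hImeas : ∀ k, Measurable (Ibar k))
    (hIindep : iIndepFun Ibar P)
    (hIlaw : ∀ k i, P {a | Ibar k a = i} = ENNReal.ofReal (wbar i)) :
    variance (fun a => (∑ i, ((⌊(n : ℝ) * w i⌋ : ℝ) / (n : ℝ)) * f (ξ i))
        + (1 / (n : ℝ)) * ∑ k, f (ξ (Ibar k a))) P
      = (1 / (n : ℝ)) * ∑ i, w i * f (ξ i) ^ 2
        - ∑ i, ((⌊(n : ℝ) * w i⌋ : ℝ) / (n : ℝ) ^ 2) * f (ξ i) ^ 2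
        - (((n : ℝ) - R) / (n : ℝ) ^ 2) * (∑ i, wbar i * f (ξ i)) ^ 2 :=
  residual_resampling_variance_general P m n ξ f w R hRn wbar hwbar Ibar hImeas hIindep hIlaw
end

section
/- Let m, n be positive integers, ξ_1,…,ξ_m points of a measurable space X, f : X → ℝ, and ω_1,…,ω_m nonnegative real weights with Σ_{i=1}^m ω_i = 1. Set R = Σ_{i=1}^m ⌊n ω_i⌋, assume R < n, define ω̄_i = (n ω_i − ⌊n ω_i⌋)/(n − R), and let Ī^1,…,Ī^{n−R} be i.i.d. random indices with P(Ī^k = i) = ω̄_i. Then the variance of the residual resampling estimator is no larger than that of multinomial resampling: Var[ Σ_{i=1}^m (⌊n ω_i⌋/n) f(ξ_i) + (1/n) Σ_{k=1}^{n−R} f(ξ_{Ī^k}) ] ≤ (1/n) { Σ_{i=1}^m ω_i f(ξ_i)² − ( Σ_{i=1}^m ω_i f(ξ_i) )² }. -/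
/-!
Write `g i = f (ξ i)`. The residual estimator is a constant plus `1/n` times a sum of `n - R`
i.i.d. copies of `g (Ī)`, so its variance is `(n - R)/n² · Var_ω̄ g`. On the other hand
`ω = a + b ω̄` with `a i = ⌊n ω i⌋/n` and `b = (n - R)/n`, where `∑ a + b = 1`; by Jensen's
inequality for the mixture of `a` with a point mass `b` at the `ω̄`-mean of `g`, the variance of
`g` under `ω` is at least `b · Var_ω̄ g`, which after dividing by `n` is the claim.
-/

open MeasureTheory ProbabilityTheory Filter Finset

section WeightedVariance

variable {ι : Type*} [Fintype ι]

def weightedVariance (v g : ι → ℝ) : ℝ :=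
  ∑ i, v i * g i ^ 2 - (∑ i, v i * g i) ^ 2

theorem sq_sum_mul_le_sum_mul_sq {c x : ι → ℝ} (hc : ∀ i, 0 ≤ c i) (h1 : ∑ i, c i = 1) :
    (∑ i, c i * x i) ^ 2 ≤ ∑ i, c i * x i ^ 2 := by
  simpa only [smul_eq_mul] using
    (even_two.convexOn_pow).map_sum_le (fun i _ => hc i) h1 (fun i _ => Set.mem_univ (x i))

theorem mul_weightedVariance_le_weightedVariance_add {a : ι → ℝ} {b : ℝ} (ha : ∀ i, 0 ≤ a i)
    (hb : 0 ≤ b) (hab : ∑ i, a i + b = 1) (v g : ι → ℝ) :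
    b * weightedVariance v g ≤ weightedVariance (fun i => a i + b * v i) g := by
  have jensen := sq_sum_mul_le_sum_mul_sq (c := fun o : Option ι => o.elim b a)
    (x := fun o => o.elim (∑ i, v i * g i) g) (fun o => o.rec hb ha)
    (by simpa only [Fintype.sum_option, Option.elim_none, Option.elim_some, add_comm] using hab)
  simp only [Fintype.sum_option, Option.elim_none, Option.elim_some] at jensen
  simp only [weightedVariance, add_mul, sum_add_distrib, mul_assoc, ← mul_sum]
  linarith [jensen]

end WeightedVariance

section Law

variable {Ω ι : Type*} [MeasurableSpace Ω] {P : Measure Ω} [Fintype ι] [MeasurableSpace ι]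
  [MeasurableSingletonClass ι] {v : ι → ℝ}

theorem memLp_comp_of_measurable [IsFiniteMeasure P] {I : Ω → ι} (hI : Measurable I)
    (g : ι → ℝ) (p : ENNReal) : MemLp (fun a => g (I a)) p P :=
  MemLp.comp_of_map MemLp.of_discrete hI.aemeasurable

theorem integral_comp_eq_sum_of_law [IsFiniteMeasure P] {I : Ω → ι} (hI : Measurable I)
    (hv : ∀ i, 0 ≤ v i) (hlaw : ∀ i, P {a | I a = i} = ENNReal.ofReal (v i)) (h : ι → ℝ) :
    ∫ a, h (I a) ∂P = ∑ i, v i * h i := by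
  rw [← integral_map hI.aemeasurable (measurable_of_finite h).aestronglyMeasurable,
    integral_fintype Integrable.of_finite]
  refine sum_congr rfl fun i _ => ?_
  simp only [Measure.real_def, Measure.map_apply hI (measurableSet_singleton i), Set.preimage,
    Set.mem_singleton_iff, hlaw, ENNReal.toReal_ofReal (hv i), smul_eq_mul]

theorem variance_comp_eq_weightedVariance_of_law [IsProbabilityMeasure P] {I : Ω → ι}
    (hI : Measurable I) (hv : ∀ i, 0 ≤ v i) (hlaw : ∀ i, P {a | I a = i} = ENNReal.ofReal (v i))
    (g : ι → ℝ) :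
    variance (fun a => g (I a)) P = weightedVariance v g := by
  rw [variance_eq_sub (memLp_comp_of_measurable hI g 2)]
  simp only [Pi.pow_apply, integral_comp_eq_sum_of_law hI hv hlaw (fun i => g i ^ 2),
    integral_comp_eq_sum_of_law hI hv hlaw g, weightedVariance]

theorem variance_sum_comp_eq_card_mul_weightedVariance [IsProbabilityMeasure P] {κ : Type*}
    [Fintype κ] {I : κ → Ω → ι} (hI : ∀ k, Measurable (I k)) (hind : iIndepFun I P)
    (hv : ∀ i, 0 ≤ v i) (hlaw : ∀ k i, P {a | I k a = i} = ENNReal.ofReal (v i)) (g : ι → ℝ) :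
    variance (fun a => ∑ k, g (I k a)) P = Fintype.card κ * weightedVariance v g := by
  have hindep : Set.Pairwise (univ : Finset κ) fun k l => IndepFun (g ∘ I k) (g ∘ I l) P :=
    fun k _ l _ hkl => (hind.indepFun hkl).comp (measurable_of_finite g) (measurable_of_finite g)
  have hsum := IndepFun.variance_sum (fun k _ => memLp_comp_of_measurable (hI k) g 2) hindep
  simp only [Finset.sum_fn] at hsum
  rw [hsum]
  simp only [variance_comp_eq_weightedVariance_of_law (hI _) hv (hlaw _), sum_const, card_univ,
    nsmul_eq_mul]

end Law

theorem residual_le_multinomial_variance_general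
    {X : Type*} {Ω : Type*} [MeasurableSpace Ω]
    (P : Measure Ω) [IsProbabilityMeasure P]
    (m n : ℕ)
    (ξ : Fin m → X) (f : X → ℝ)
    (w : Fin m → ℝ) (hw : ∀ i, 0 ≤ w i)
    (R : ℕ) (hR : (R : ℤ) = ∑ i, ⌊(n : ℝ) * w i⌋) (hRn : R < n)
    (wbar : Fin m → ℝ)
    (hwbar : ∀ i, wbar i = ((n : ℝ) * w i - ⌊(n : ℝ) * w i⌋) / ((n : ℝ) - R))
    (Ibar : Fin (n - R) → Ω → Fin m) (hImeas : ∀ k, Measurable (Ibar k))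
    (hIindep : iIndepFun Ibar P)
    (hIlaw : ∀ k i, P {a | Ibar k a = i} = ENNReal.ofReal (wbar i)) :
    variance (fun a => (∑ i, ((⌊(n : ℝ) * w i⌋ : ℝ) / (n : ℝ)) * f (ξ i))
        + (1 / (n : ℝ)) * ∑ k, f (ξ (Ibar k a))) P
      ≤ (1 / (n : ℝ)) *
        ((∑ i, w i * f (ξ i) ^ 2) - (∑ i, w i * f (ξ i)) ^ 2) := by
  have hnR : (0 : ℝ) < n - R := sub_pos.mpr (mod_cast hRn)
  have hn : (0 : ℝ) < n := by linarith [R.cast_nonneg (α := ℝ)]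
  have hwbar_nonneg (i : Fin m) : 0 ≤ wbar i :=
    hwbar i ▸ div_nonneg (sub_nonneg.mpr (Int.floor_le _)) hnR.le
  have hmix : w = fun i => ⌊(n : ℝ) * w i⌋ / (n : ℝ) + ((n - R) / n) * wbar i := by
    funext i
    rw [hwbar i]
    field_simp
    ring
  have hmass : ∑ i, (⌊(n : ℝ) * w i⌋ : ℝ) / n + (n - R) / n = 1 := by
    rw [← sum_div, ← Int.cast_sum, ← hR, Int.cast_natCast]
    field_simp
    ring
  have hmixture := mul_weightedVariance_le_weightedVariance_add
    (fun i => div_nonneg (Int.cast_nonneg (Int.floor_nonneg.mpr (mul_nonneg hn.le (hw i)))) hn.le)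
    (div_nonneg hnR.le hn.le) hmass wbar (fun i => f (ξ i))
  rw [← hmix] at hmixture
  rw [variance_const_add (by fun_prop), variance_const_mul,
    variance_sum_comp_eq_card_mul_weightedVariance hImeas hIindep hwbar_nonneg hIlaw
      (fun i => f (ξ i)), Fintype.card_fin, Nat.cast_sub hRn.le]
  calc (1 / (n : ℝ)) ^ 2 * ((n - R) * weightedVariance wbar fun i => f (ξ i))
      = 1 / n * ((n - R) / n * weightedVariance wbar fun i => f (ξ i)) := by field_simp
    _ ≤ 1 / n * weightedVariance w fun i => f (ξ i) := by gcongr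

/-- the variance of the residual resampling estimator is no larger than
that of multinomial resampling, namely `(1/n){∑_i w i f(ξ i)² − (∑_i w i f(ξ i))²}`. -/
theorem residual_le_multinomial_variance
    {X : Type*} [MeasurableSpace X] {Ω : Type*} [MeasurableSpace Ω]
    (P : Measure Ω) [IsProbabilityMeasure P]
    (m n : ℕ) (hm : 0 < m) (hn : 0 < n)
    (ξ : Fin m → X) (f : X → ℝ)
    (w : Fin m → ℝ) (hw : ∀ i, 0 ≤ w i) (hw1 : ∑ i, w i = 1)
    (R : ℕ) (hR : (R : ℤ) = ∑ i, ⌊(n : ℝ) * w i⌋) (hRn : R < n)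
    (wbar : Fin m → ℝ)
    (hwbar : ∀ i, wbar i = ((n : ℝ) * w i - ⌊(n : ℝ) * w i⌋) / ((n : ℝ) - R))
    (Ibar : Fin (n - R) → Ω → Fin m) (hImeas : ∀ k, Measurable (Ibar k))
    (hIindep : iIndepFun Ibar P)
    (hIlaw : ∀ k i, P {a | Ibar k a = i} = ENNReal.ofReal (wbar i)) :
    variance (fun a => (∑ i, ((⌊(n : ℝ) * w i⌋ : ℝ) / (n : ℝ)) * f (ξ i))
        + (1 / (n : ℝ)) * ∑ k, f (ξ (Ibar k a))) P
      ≤ (1 / (n : ℝ)) *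
        ((∑ i, w i * f (ξ i) ^ 2) - (∑ i, w i * f (ξ i)) ^ 2) :=
  residual_le_multinomial_variance_general P m n ξ f w hw R hR hRn wbar hwbar Ibar hImeas hIindep
    hIlaw
end

section
/- Let m, n be positive integers, ξ_1,…,ξ_m points of a measurable space X, f : X → ℝ bounded measurable, and ω_1,…,ω_m nonnegative real weights with Σ_{i=1}^m ω_i = 1. Let D_ω^inv : (0,1] → {1,…,m} be defined by D_ω^inv(u) = i for u ∈ ( Σ_{j=1}^{i−1} ω_j , Σ_{j=1}^{i} ω_j ]. Let U^1,…,U^n be independent random variables with U^i uniformly distributed on the interval ((i−1)/n, i/n]. Then stratified resampling is unbiased: E[ Σ_{i=1}^n f(ξ_{D_ω^inv(U^i)}) ] = n Σ_{i=1}^m ω_i f(ξ_i). -/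
open MeasureTheory ProbabilityTheory Filter Finset

/-! With `g := f ∘ ξ ∘ D_ω^inv`, linearity of expectation and the law of `U^i` (density `n` on
the `i`-th stratum) turn the left side into `n ∑_i ∫_{(i-1)/n}^{i/n} g = n ∫_0^1 g`. The interval
`(0,1]` is also the union of the intervals `(∑_{j<i} ω_j, ∑_{j≤i} ω_j]` of lengths `ω_i`, on each of
which `g` is the constant `f(ξ_i)`, so `∫_0^1 g = ∑_i ω_i f(ξ_i)`. -/

lemma integrable_comp_of_finite {α β E : Type*} [MeasurableSpace α] [MeasurableSpace β]
    [Finite β] [MeasurableSingletonClass β] [NormedAddCommGroup E] {μ : Measure α}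
    [IsFiniteMeasure μ] {T : α → β} (hT : Measurable T) (φ : β → E) :
    Integrable (fun x => φ (T x)) μ :=
  Integrable.of_finite.comp_measurable hT

lemma intervalIntegrable_comp_of_finite {β E : Type*} [MeasurableSpace β]
    [Finite β] [MeasurableSingletonClass β] [NormedAddCommGroup E] {T : ℝ → β}
    (hT : Measurable T) (φ : β → E) (a b : ℝ) :
    IntervalIntegrable (fun x => φ (T x)) volume a b :=
  ⟨integrable_comp_of_finite hT φ, integrable_comp_of_finite hT φ⟩

lemma intervalIntegral_eq_mul_of_eqOn_Ioc {g : ℝ → ℝ} {a b c : ℝ} (hab : a ≤ b)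
    (hg : Set.EqOn g (fun _ => c) (Set.Ioc a b)) :
    ∫ u in a..b, g u = (b - a) * c := by
  rw [intervalIntegral.integral_of_le hab, setIntegral_congr_fun measurableSet_Ioc hg,
    setIntegral_const, Real.volume_real_Ioc_of_le hab, smul_eq_mul]

lemma sum_intervalIntegral_Iio_Iic {m : ℕ} (w : Fin m → ℝ) {g : ℝ → ℝ}
    (hg : ∀ a b, IntervalIntegrable g volume a b) :
    ∑ i, ∫ u in (∑ j ∈ Iio i, w j)..(∑ j ∈ Iic i, w j), g u = ∫ u in 0..∑ i, w i, g u := by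
  -- the partial sums of `w`, indexed by `ℕ` so that the adjacent-interval lemma applies
  set s : ℕ → ℝ := fun k => ∑ j ∈ univ.filter (fun j : Fin m => (j : ℕ) < k), w j
  have hs_Iio (i : Fin m) : s i = ∑ j ∈ Iio i, w j := by
    simp only [s, ← Fin.lt_def, filter_gt_eq_Iio]
  have hs_Iic (i : Fin m) : s (i + 1) = ∑ j ∈ Iic i, w j := by
    simp only [s, Nat.lt_succ_iff, ← Fin.le_def, filter_ge_eq_Iic]
  have hs_zero : s 0 = 0 := by simp [s]
  have hs_m : s m = ∑ i, w i := by simp [s]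
  calc ∑ i : Fin m, ∫ u in (∑ j ∈ Iio i, w j)..(∑ j ∈ Iic i, w j), g u
      = ∑ k ∈ range m, ∫ u in s k..s (k + 1), g u := by
        rw [← Fin.sum_univ_eq_sum_range]; simp only [hs_Iio, hs_Iic]
    _ = ∫ u in 0..∑ i, w i, g u := by
        rw [intervalIntegral.sum_integral_adjacent_intervals fun k _ => hg _ _, hs_zero, hs_m]

lemma sum_intervalIntegral_strata {n : ℕ} (hn : n ≠ 0) {g : ℝ → ℝ}
    (hg : ∀ a b, IntervalIntegrable g volume a b) :
    ∑ i : Fin n, ∫ u in ((i : ℕ) : ℝ) / n..(((i : ℕ) + 1 : ℝ) / n), g u = ∫ u in 0..1, g u := by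
  have h := intervalIntegral.sum_integral_adjacent_intervals (a := fun k : ℕ => (k : ℝ) / n)
    (n := n) (f := g) fun k _ => hg _ _
  rw [Fin.sum_univ_eq_sum_range (fun k => ∫ u in (k : ℝ) / n..((k + 1 : ℝ) / n), g u)]
  push_cast at h
  rwa [zero_div, div_self (Nat.cast_ne_zero.mpr hn)] at h

lemma intervalIntegral_comp_inverseCdf {m : ℕ} {w : Fin m → ℝ} (hw : ∀ i, 0 ≤ w i)
    {D : ℝ → Fin m} (hD : Measurable D)
    (hDinv : ∀ (u : ℝ) (i : Fin m),
      u ∈ Set.Ioc (∑ j ∈ Iio i, w j) (∑ j ∈ Iic i, w j) → D u = i) (φ : Fin m → ℝ) :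
    ∫ u in 0..∑ i, w i, φ (D u) = ∑ i, w i * φ i := by
  rw [← sum_intervalIntegral_Iio_Iic w (intervalIntegrable_comp_of_finite hD φ)]
  refine sum_congr rfl fun i _ => ?_
  have hwi : ∑ j ∈ Iic i, w j - ∑ j ∈ Iio i, w j = w i := by
    rw [← Iio_insert, sum_insert notMem_Iio_self, add_sub_cancel_right]
  rw [intervalIntegral_eq_mul_of_eqOn_Ioc (by linarith [hw i])
    fun u hu => congrArg φ (hDinv u i hu), hwi]

theorem stratified_resampling_unbiased_general
    {X : Type*} {Ω : Type*} [MeasurableSpace Ω]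
    (P : Measure Ω) [IsProbabilityMeasure P]
    (m n : ℕ) (hn : 0 < n)
    (ξ : Fin m → X) (f : X → ℝ)
    (w : Fin m → ℝ) (hw : ∀ i, 0 ≤ w i) (hw1 : ∑ i, w i = 1)
    (Dinv : ℝ → Fin m) (hDmeas : Measurable Dinv)
    (hDinv : ∀ (u : ℝ) (i : Fin m),
      u ∈ Set.Ioc (∑ j ∈ Finset.Iio i, w j) (∑ j ∈ Finset.Iic i, w j) → Dinv u = i)
    (U : Fin n → Ω → ℝ) (hUmeas : ∀ i, Measurable (U i))
    (hUlaw : ∀ i : Fin n, Measure.map (U i) P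
      = (n : ENNReal) • volume.restrict (Set.Ioc (((i : ℕ) : ℝ) / n) (((i : ℕ) + 1 : ℝ) / n))) :
    ∫ a, ∑ i : Fin n, f (ξ (Dinv (U i a))) ∂P = n * ∑ i, w i * f (ξ i) := by
  set φ : Fin m → ℝ := fun i => f (ξ i)
  have hstratum (i : Fin n) : ∫ a, φ (Dinv (U i a)) ∂P
      = n * ∫ u in ((i : ℕ) : ℝ) / n..(((i : ℕ) + 1 : ℝ) / n), φ (Dinv u) := by
    rw [← integral_map (f := fun u => φ (Dinv u)) (hUmeas i).aemeasurable
        ((Measurable.of_discrete (f := φ)).comp hDmeas).aestronglyMeasurable,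
      hUlaw i, integral_smul_measure, intervalIntegral.integral_of_le (by gcongr; linarith),
      ENNReal.toReal_natCast, smul_eq_mul]
  calc ∫ a, ∑ i, φ (Dinv (U i a)) ∂P = ∑ i, ∫ a, φ (Dinv (U i a)) ∂P :=
        integral_finsetSum _ fun i _ => integrable_comp_of_finite (hDmeas.comp (hUmeas i)) φ
    _ = n * ∫ u in 0..1, φ (Dinv u) := by
        simp_rw [hstratum]
        rw [← mul_sum,
          sum_intervalIntegral_strata hn.ne' (intervalIntegrable_comp_of_finite hDmeas φ)]
    _ = n * ∑ i, w i * φ i := by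
        rw [← intervalIntegral_comp_inverseCdf hw hDmeas hDinv φ, hw1]

/-- unbiasedness of stratified resampling.
`Dinv` is the inverse cdf of the normalized weights (`Dinv u = i` on
`(∑_{j<i} w j, ∑_{j≤i} w j]`), and the `U i` are independent with `U i` uniform on
`((i−1)/n, i/n]`.  Then `E[∑_i f(ξ_{Dinv(U i)})] = n ∑_i w i f(ξ i)`. -/
theorem stratified_resampling_unbiased
    {X : Type*} [MeasurableSpace X] {Ω : Type*} [MeasurableSpace Ω]
    (P : Measure Ω) [IsProbabilityMeasure P]
    (m n : ℕ) (hm : 0 < m) (hn : 0 < n)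
    (ξ : Fin m → X) (f : X → ℝ) (hf : Measurable f) (hfb : ∃ C, ∀ x, |f x| ≤ C)
    (w : Fin m → ℝ) (hw : ∀ i, 0 ≤ w i) (hw1 : ∑ i, w i = 1)
    (Dinv : ℝ → Fin m) (hDmeas : Measurable Dinv)
    (hDinv : ∀ (u : ℝ) (i : Fin m),
      u ∈ Set.Ioc (∑ j ∈ Finset.Iio i, w j) (∑ j ∈ Finset.Iic i, w j) → Dinv u = i)
    (U : Fin n → Ω → ℝ) (hUmeas : ∀ i, Measurable (U i))
    (hUindep : iIndepFun U P)
    (hUlaw : ∀ i : Fin n, Measure.map (U i) P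
      = (n : ENNReal) • volume.restrict (Set.Ioc (((i : ℕ) : ℝ) / n) (((i : ℕ) + 1 : ℝ) / n))) :
    ∫ a, ∑ i : Fin n, f (ξ (Dinv (U i a))) ∂P = n * ∑ i, w i * f (ξ i) :=
  stratified_resampling_unbiased_general P m n hn ξ f w hw hw1 Dinv hDmeas hDinv U hUmeas hUlaw
end

section
/- Let m, n be positive integers, ξ_1,…,ξ_m points of a measurable space X, f : X → ℝ bounded measurable, and ω_1,…,ω_m nonnegative real weights with Σ_{i=1}^m ω_i = 1. Let D_ω^inv(u) = i for u ∈ ( Σ_{j=1}^{i−1} ω_j , Σ_{j=1}^{i} ω_j ], and let U^1,…,U^n be independent with U^i uniform on ((i−1)/n, i/n]. Then the variance of the stratified resampling estimator is no larger than that of multinomial resampling: Var[ (1/n) Σ_{i=1}^n f(ξ_{D_ω^inv(U^i)}) ] ≤ (1/n) { Σ_{i=1}^m ω_i f(ξ_i)² − ( Σ_{i=1}^m ω_i f(ξ_i) )² }. -/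
open MeasureTheory ProbabilityTheory Finset

/-!
Write `g = f ∘ ξ ∘ D_ω^inv`, so that the estimator is the mean of the independent variables
`Y_i = g(U^i)`. Since `U^i` has density `n` on the `i`-th stratum and the strata tile `(0,1]`,
`∑ E[Y_i] = n ∫₀¹ g = n ∑ ω_i f(ξ_i)` and likewise `∑ E[Y_i²] = n ∑ ω_i f(ξ_i)²`.
By independence `Var(∑ Y_i) = ∑ E[Y_i²] - ∑ E[Y_i]²`, and Cauchy–Schwarz gives
`∑ E[Y_i]² ≥ (∑ E[Y_i])² / n`, which is exactly the multinomial variance after scaling by `1/n²`.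
-/

namespace ProbabilityTheory

lemma IndepFun.variance_sum_le {Ω ι : Type*} [MeasurableSpace Ω] {μ : Measure Ω}
    [IsProbabilityMeasure μ] {X : ι → Ω → ℝ} {s : Finset ι} (hX : ∀ i ∈ s, MemLp (X i) 2 μ)
    (hindep : Set.Pairwise ↑s fun i j => X i ⟂ᵢ[μ] X j) :
    variance (∑ i ∈ s, X i) μ ≤ ∑ i ∈ s, μ[X i ^ 2] - (∑ i ∈ s, μ[X i]) ^ 2 / #s := by
  rw [IndepFun.variance_sum hX hindep, sum_congr rfl fun i hi => variance_eq_sub (hX i hi),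
    sum_sub_distrib]
  gcongr
  exact div_le_of_le_mul₀ (Nat.cast_nonneg _) (sum_nonneg fun _ _ => sq_nonneg _)
    (by simpa only [mul_comm] using sq_sum_le_card_mul_sum_sq)

end ProbabilityTheory

lemma sum_setIntegral_Ioc_of_monotone {G : ℝ → ℝ} {s : ℕ → ℝ} (hs : Monotone s) {k : ℕ}
    (hG : ∀ j < k, IntegrableOn G (Set.Ioc (s j) (s (j + 1)))) :
    ∑ j ∈ range k, ∫ u in Set.Ioc (s j) (s (j + 1)), G u = ∫ u in Set.Ioc (s 0) (s k), G u := by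
  have h := intervalIntegral.sum_integral_adjacent_intervals fun j hj =>
    (intervalIntegrable_iff_integrableOn_Ioc_of_le (hs j.le_succ)).2 (hG j hj)
  rwa [intervalIntegral.integral_of_le (hs k.zero_le),
    sum_congr rfl fun j _ => intervalIntegral.integral_of_le (hs j.le_succ)] at h

lemma sum_setIntegral_strata {n : ℕ} (hn : 0 < n) {G : ℝ → ℝ}
    (hG : IntegrableOn G (Set.Ioc 0 1)) :
    ∑ i : Fin n, ∫ u in Set.Ioc (((i : ℕ) : ℝ) / n) (((i : ℕ) + 1 : ℝ) / n), G u
      = ∫ u in Set.Ioc 0 1, G u := by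
  have hn' : (0 : ℝ) < n := Nat.cast_pos.2 hn
  have hs : Monotone fun j : ℕ => (j : ℝ) / n := fun _ _ hab =>
    div_le_div_of_nonneg_right (Nat.cast_le.2 hab) hn'.le
  have h := sum_setIntegral_Ioc_of_monotone hs (k := n) fun j hj =>
    hG.mono_set (Set.Ioc_subset_Ioc (by positivity) ((div_le_one hn').2 (by exact_mod_cast hj)))
  simp only [CharP.cast_eq_zero, zero_div, div_self hn'.ne', Nat.cast_succ] at h
  rw [← h, Fin.sum_univ_eq_sum_range (fun j => ∫ u in Set.Ioc ((j : ℝ) / n) ((j + 1) / n), G u)]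

lemma setIntegral_Ioc_zero_one_comp_eq_sum {m : ℕ} {w : Fin m → ℝ} (hw : ∀ i, 0 ≤ w i)
    (hw1 : ∑ i, w i = 1) {D : ℝ → Fin m}
    (hD : ∀ (u : ℝ) (i : Fin m), u ∈ Set.Ioc (∑ j ∈ Iio i, w j) (∑ j ∈ Iic i, w j) → D u = i)
    (c : Fin m → ℝ) :
    ∫ u in Set.Ioc 0 1, c (D u) = ∑ i, w i * c i := by
  set s : ℕ → ℝ := fun k => ∑ j : Fin m with j.val < k, w j
  have hs_Iio (i : Fin m) : s i = ∑ j ∈ Iio i, w j := by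
    refine sum_congr ?_ fun _ _ => rfl
    ext j; simp only [mem_filter, mem_univ, true_and, mem_Iio, Fin.lt_def]
  have hs_Iic (i : Fin m) : s (i + 1) = ∑ j ∈ Iic i, w j := by
    refine sum_congr ?_ fun _ _ => rfl
    ext j; simp only [mem_filter, mem_univ, true_and, mem_Iic, Fin.le_def, Nat.lt_succ_iff]
  have hs_mono : Monotone s := monotone_nat_of_le_succ fun k =>
    sum_le_sum_of_subset_of_nonneg (monotone_filter_right _ fun _ _ h => by omega)
      fun i _ _ => hw i
  have hs_length (i : Fin m) : s (i + 1) - s i = w i := by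
    rw [hs_Iio, hs_Iic, ← Iio_insert, sum_insert (by simp)]; ring
  have hconst (i : Fin m) : Set.EqOn (fun u => c (D u)) (fun _ => c i)
      (Set.Ioc (s i) (s (i + 1))) := fun u hu => by
    rw [hs_Iio, hs_Iic] at hu
    simp only [hD u i hu]
  have hs_zero : s 0 = 0 := by simp [s]
  have hs_m : s m = 1 := by rw [← hw1]; simp [s]
  calc ∫ u in Set.Ioc 0 1, c (D u)
      = ∑ j ∈ range m, ∫ u in Set.Ioc (s j) (s (j + 1)), c (D u) := by
        rw [sum_setIntegral_Ioc_of_monotone hs_mono, hs_zero, hs_m]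
        intro j hj
        exact (integrableOn_const measure_Ioc_lt_top.ne).congr_fun (hconst ⟨j, hj⟩).symm
          measurableSet_Ioc
    _ = ∑ i : Fin m, ∫ u in Set.Ioc (s i) (s (i + 1)), c (D u) :=
        (Fin.sum_univ_eq_sum_range (fun j => ∫ u in Set.Ioc (s j) (s (j + 1)), c (D u)) m).symm
    _ = ∑ i, w i * c i := sum_congr rfl fun i _ => by
        rw [setIntegral_congr_fun measurableSet_Ioc (hconst i), setIntegral_const, measureReal_def,
          Real.volume_Ioc, ENNReal.toReal_ofReal (hs_length i ▸ hw i), hs_length, smul_eq_mul]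

lemma sum_integral_comp_stratified {Ω : Type*} [MeasurableSpace Ω] {P : Measure Ω} {n : ℕ}
    (hn : 0 < n) {U : Fin n → Ω → ℝ} (hU : ∀ i, AEMeasurable (U i) P)
    (hUlaw : ∀ i : Fin n, Measure.map (U i) P
      = (n : ENNReal) • volume.restrict (Set.Ioc (((i : ℕ) : ℝ) / n) (((i : ℕ) + 1 : ℝ) / n)))
    {G : ℝ → ℝ} (hGm : Measurable G) (hG : IntegrableOn G (Set.Ioc 0 1)) :
    ∑ i, ∫ a, G (U i a) ∂P = n * ∫ u in Set.Ioc 0 1, G u := by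
  rw [← sum_setIntegral_strata hn hG, mul_sum]
  refine sum_congr rfl fun i _ => ?_
  rw [← integral_map (hU i) hGm.aestronglyMeasurable, hUlaw i, integral_smul_measure]
  simp

theorem stratified_le_multinomial_variance_general
    {X : Type*} {Ω : Type*} [MeasurableSpace Ω]
    (P : Measure Ω) [IsProbabilityMeasure P]
    (m n : ℕ) (hn : 0 < n)
    (ξ : Fin m → X) (f : X → ℝ)
    (w : Fin m → ℝ) (hw : ∀ i, 0 ≤ w i) (hw1 : ∑ i, w i = 1)
    (Dinv : ℝ → Fin m) (hDmeas : Measurable Dinv)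
    (hDinv : ∀ (u : ℝ) (i : Fin m),
      u ∈ Set.Ioc (∑ j ∈ Finset.Iio i, w j) (∑ j ∈ Finset.Iic i, w j) → Dinv u = i)
    (U : Fin n → Ω → ℝ) (hUmeas : ∀ i, Measurable (U i))
    (hUindep : iIndepFun U P)
    (hUlaw : ∀ i : Fin n, Measure.map (U i) P
      = (n : ENNReal) • volume.restrict (Set.Ioc (((i : ℕ) : ℝ) / n) (((i : ℕ) + 1 : ℝ) / n))) :
    variance (fun a => (1 / (n : ℝ)) * ∑ i : Fin n, f (ξ (Dinv (U i a)))) P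
      ≤ (1 / (n : ℝ)) *
        ((∑ i, w i * f (ξ i) ^ 2) - (∑ i, w i * f (ξ i)) ^ 2) := by
  set Y : Fin n → Ω → ℝ := fun i a => f (ξ (Dinv (U i a)))
  have hY : ∀ i ∈ univ, MemLp (Y i) 2 P := fun i _ =>
    (MemLp.of_discrete (f := f ∘ ξ)).comp_of_map (hDmeas.comp (hUmeas i)).aemeasurable
  have hmeas (c : Fin m → ℝ) : Measurable fun u => c (Dinv u) := .comp .of_discrete hDmeas
  have hindep : Set.Pairwise ↑(univ : Finset (Fin n)) fun i j => Y i ⟂ᵢ[P] Y j :=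
    fun i _ j _ hij => (hUindep.indepFun hij).comp (hmeas (f ∘ ξ)) (hmeas (f ∘ ξ))
  have hmoment (c : Fin m → ℝ) : ∑ i, ∫ a, c (Dinv (U i a)) ∂P = n * ∑ j, w j * c j := by
    rw [← setIntegral_Ioc_zero_one_comp_eq_sum hw hw1 hDinv c]
    exact sum_integral_comp_stratified hn (fun i => (hUmeas i).aemeasurable) hUlaw (hmeas c)
      (memLp_one_iff_integrable.1 ((MemLp.of_discrete (f := c)).comp_of_map hDmeas.aemeasurable))
  have hmean : ∑ i, P[Y i] = n * ∑ j, w j * f (ξ j) := hmoment (f ∘ ξ)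
  have hsecond : ∑ i, P[Y i ^ 2] = n * ∑ j, w j * f (ξ j) ^ 2 := hmoment fun j => f (ξ j) ^ 2
  have hvar := IndepFun.variance_sum_le hY hindep
  rw [hmean, hsecond, card_univ, Fintype.card_fin] at hvar
  have hn' : (0 : ℝ) < n := Nat.cast_pos.2 hn
  calc variance (fun a => 1 / (n : ℝ) * ∑ i, Y i a) P
      = (1 / (n : ℝ)) ^ 2 * variance (∑ i, Y i) P := by
        rw [← variance_const_mul]; simp only [Finset.sum_apply]
    _ ≤ (1 / (n : ℝ)) ^ 2 * (n * ∑ j, w j * f (ξ j) ^ 2 - (n * ∑ j, w j * f (ξ j)) ^ 2 / n) := by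
        gcongr
    _ = _ := by field_simp

/-- the variance of the stratified resampling estimator is no larger than
that of multinomial resampling, namely `(1/n){∑_i w i f(ξ i)² − (∑_i w i f(ξ i))²}`. -/
theorem stratified_le_multinomial_variance
    {X : Type*} [MeasurableSpace X] {Ω : Type*} [MeasurableSpace Ω]
    (P : Measure Ω) [IsProbabilityMeasure P]
    (m n : ℕ) (hm : 0 < m) (hn : 0 < n)
    (ξ : Fin m → X) (f : X → ℝ) (hf : Measurable f) (hfb : ∃ C, ∀ x, |f x| ≤ C)
    (w : Fin m → ℝ) (hw : ∀ i, 0 ≤ w i) (hw1 : ∑ i, w i = 1)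
    (Dinv : ℝ → Fin m) (hDmeas : Measurable Dinv)
    (hDinv : ∀ (u : ℝ) (i : Fin m),
      u ∈ Set.Ioc (∑ j ∈ Finset.Iio i, w j) (∑ j ∈ Finset.Iic i, w j) → Dinv u = i)
    (U : Fin n → Ω → ℝ) (hUmeas : ∀ i, Measurable (U i))
    (hUindep : iIndepFun U P)
    (hUlaw : ∀ i : Fin n, Measure.map (U i) P
      = (n : ENNReal) • volume.restrict (Set.Ioc (((i : ℕ) : ℝ) / n) (((i : ℕ) + 1 : ℝ) / n))) :
    variance (fun a => (1 / (n : ℝ)) * ∑ i : Fin n, f (ξ (Dinv (U i a)))) P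
      ≤ (1 / (n : ℝ)) *
        ((∑ i, w i * f (ξ i) ^ 2) - (∑ i, w i * f (ξ i)) ^ 2) :=
  stratified_le_multinomial_variance_general P m n hn ξ f w hw hw1 Dinv hDmeas hDinv U hUmeas
    hUindep hUlaw
end

section
/- Let m, n be positive integers, ξ_1,…,ξ_m points of a measurable space X, f : X → ℝ bounded measurable, and ω_1,…,ω_m nonnegative real weights with Σ_{i=1}^m ω_i = 1. Let D_ω^inv(u) = i for u ∈ ( Σ_{j=1}^{i−1} ω_j , Σ_{j=1}^{i} ω_j ]. Let U be a single random variable uniformly distributed on (0, 1/n], and set U^i = (i−1)/n + U for i = 1,…,n. Then systematic resampling is unbiased: E[ Σ_{i=1}^n f(ξ_{D_ω^inv(U^i)}) ] = n Σ_{i=1}^m ω_i f(ξ_i). -/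
open MeasureTheory Finset

/-!
With `g u = f (ξ (Dinv u))`, the point `i / n + U` is uniform on `(i / n, (i + 1) / n]`, so the
`i`-th summand has expectation `n ∫_{i/n}^{(i+1)/n} g`; these intervals tile `(0, 1]`, so the
expectation is `n ∫_0^1 g`. The interval `(0, 1]` is also tiled by the pieces
`(∑_{j<i} w j, ∑_{j≤i} w j]` of length `w i`, on which `g` is the constant `f (ξ i)`.
-/

section InverseCdf

variable {m : ℕ}

def partialWeight (w : Fin m → ℝ) (k : ℕ) : ℝ := ∑ j : Fin m with j.val < k, w j

def IsInverseCdf (w : Fin m → ℝ) (D : ℝ → Fin m) : Prop :=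
  ∀ (u : ℝ) (i : Fin m), u ∈ Set.Ioc (∑ j ∈ Iio i, w j) (∑ j ∈ Iic i, w j) → D u = i

variable {w : Fin m → ℝ}

@[simp] lemma partialWeight_zero : partialWeight w 0 = 0 := by
  simp [partialWeight]

@[simp] lemma partialWeight_self : partialWeight w m = ∑ i, w i := by
  simp [partialWeight]

lemma partialWeight_val (i : Fin m) : partialWeight w i = ∑ j ∈ Iio i, w j := by
  simp only [partialWeight]
  congr 1
  ext j
  simp

lemma partialWeight_val_succ (i : Fin m) :
    partialWeight w (i + 1) = ∑ j ∈ Iic i, w j := by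
  simp only [partialWeight]
  congr 1
  ext j
  simp

lemma partialWeight_val_succ_eq_add (i : Fin m) :
    partialWeight w (i + 1) = partialWeight w i + w i := by
  rw [partialWeight_val_succ, partialWeight_val, ← Iio_insert, sum_insert (by simp), add_comm]

lemma partialWeight_val_le_succ (hw : ∀ i, 0 ≤ w i) (i : Fin m) :
    partialWeight w i ≤ partialWeight w (i + 1) := by
  rw [partialWeight_val_succ_eq_add]
  linarith [hw i]

variable {E : Type*} {D : ℝ → Fin m}

lemma IsInverseCdf.eqOn_comp (hD : IsInverseCdf w D) (h : Fin m → E) (i : Fin m) :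
    Set.EqOn (fun u => h (D u)) (fun _ => h i)
      (Set.Ioc (partialWeight w i) (partialWeight w (i + 1))) := by
  intro u hu
  rw [partialWeight_val, partialWeight_val_succ] at hu
  simp [hD u i hu]

variable [NormedAddCommGroup E]

lemma IsInverseCdf.intervalIntegrable_comp_piece (hw : ∀ i, 0 ≤ w i) (hD : IsInverseCdf w D)
    (h : Fin m → E) (i : Fin m) :
    IntervalIntegrable (fun u => h (D u)) volume (partialWeight w i) (partialWeight w (i + 1)) := by
  rw [intervalIntegrable_iff_integrableOn_Ioc_of_le (partialWeight_val_le_succ hw i)]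
  exact (integrableOn_const (by simp)).congr_fun (hD.eqOn_comp h i).symm measurableSet_Ioc

lemma IsInverseCdf.intervalIntegrable_comp (hw : ∀ i, 0 ≤ w i) (hD : IsInverseCdf w D)
    (h : Fin m → E) : IntervalIntegrable (fun u => h (D u)) volume 0 (∑ i, w i) := by
  rw [← partialWeight_zero (w := w), ← partialWeight_self]
  exact IntervalIntegrable.trans_iterate fun k hk =>
    hD.intervalIntegrable_comp_piece hw h ⟨k, hk⟩

variable [NormedSpace ℝ E] [CompleteSpace E]

lemma IsInverseCdf.integral_comp_piece (hw : ∀ i, 0 ≤ w i) (hD : IsInverseCdf w D)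
    (h : Fin m → E) (i : Fin m) :
    ∫ u in (partialWeight w i)..(partialWeight w (i + 1)), h (D u) = w i • h i := by
  rw [intervalIntegral.integral_of_le (partialWeight_val_le_succ hw i),
    setIntegral_congr_fun measurableSet_Ioc (hD.eqOn_comp h i), setIntegral_const,
    measureReal_def, Real.volume_Ioc, partialWeight_val_succ_eq_add, add_sub_cancel_left,
    ENNReal.toReal_ofReal (hw i)]

theorem IsInverseCdf.integral_comp (hw : ∀ i, 0 ≤ w i) (hD : IsInverseCdf w D)
    (h : Fin m → E) : ∫ u in (0 : ℝ)..(∑ i, w i), h (D u) = ∑ i, w i • h i := by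
  rw [← partialWeight_zero (w := w), ← partialWeight_self,
    ← intervalIntegral.sum_integral_adjacent_intervals fun k hk =>
      hD.intervalIntegrable_comp_piece hw h ⟨k, hk⟩,
    ← Fin.sum_univ_eq_sum_range
      (fun k => ∫ u in (partialWeight w k)..(partialWeight w (k + 1)), h (D u))]
  exact sum_congr rfl fun i _ => hD.integral_comp_piece hw h i

end InverseCdf

section UniformShift

variable {E : Type*} [NormedAddCommGroup E]
  {Ω : Type*} [MeasurableSpace Ω] {P : Measure Ω} {U : Ω → ℝ} {n : ℕ} {g : ℝ → E} {c : ℝ}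

lemma IntervalIntegrable.of_div_nat (hg : IntervalIntegrable g volume 0 1) {k : ℕ} (hk : k < n) :
    IntervalIntegrable g volume (k / n) (k / n + 1 / n) := by
  have hn : (0 : ℝ) < n := by exact_mod_cast k.zero_le.trans_lt hk
  refine hg.mono_set (Set.uIcc_subset_uIcc ?_ ?_) <;>
    rw [Set.uIcc_of_le zero_le_one] <;> constructor <;> try positivity
  · rw [div_le_one hn]; exact_mod_cast hk.le
  · rw [← add_div, div_le_one hn]; exact_mod_cast hk

lemma integrable_map_comp_const_add
    (hlaw : P.map U = (n : ENNReal) • volume.restrict (Set.Ioc (0 : ℝ) (1 / n)))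
    (hg : IntervalIntegrable g volume c (c + 1 / n)) :
    Integrable (fun u => g (c + u)) (P.map U) := by
  have hshift : IntervalIntegrable (fun u => g (c + u)) volume 0 (1 / n) := by
    simpa using hg.comp_add_left c
  rw [hlaw]
  exact ((intervalIntegrable_iff_integrableOn_Ioc_of_le (by positivity)).1 hshift).smul_measure
    (by simp)

lemma integrable_comp_const_add_of_map_eq (hU : AEMeasurable U P)
    (hlaw : P.map U = (n : ENNReal) • volume.restrict (Set.Ioc (0 : ℝ) (1 / n)))
    (hg : IntervalIntegrable g volume c (c + 1 / n)) :
    Integrable (fun a => g (c + U a)) P :=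
  (integrable_map_comp_const_add hlaw hg).comp_aemeasurable hU

variable [NormedSpace ℝ E]

lemma integral_comp_const_add_of_map_eq (hU : AEMeasurable U P)
    (hlaw : P.map U = (n : ENNReal) • volume.restrict (Set.Ioc (0 : ℝ) (1 / n)))
    (hg : IntervalIntegrable g volume c (c + 1 / n)) :
    ∫ a, g (c + U a) ∂P = (n : ℝ) • ∫ u in c..(c + 1 / n), g u := by
  rw [← integral_map hU (integrable_map_comp_const_add hlaw hg).aestronglyMeasurable, hlaw,
    integral_smul_measure, ← intervalIntegral.integral_of_le (by positivity),
    intervalIntegral.integral_comp_add_left, add_zero]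
  simp

lemma sum_integral_div_nat (hn : 0 < n) (hg : IntervalIntegrable g volume 0 1) :
    ∑ k ∈ range n, ∫ u in (k / n : ℝ)..(k / n + 1 / n), g u = ∫ u in (0 : ℝ)..1, g u := by
  have hn' : (n : ℝ) ≠ 0 := by positivity
  have := intervalIntegral.sum_integral_adjacent_intervals (a := fun k : ℕ => (k : ℝ) / n)
    (f := g) (μ := volume) fun k hk => by simpa [add_div] using hg.of_div_nat hk
  simpa [add_div, hn'] using this

end UniformShift

theorem systematic_resampling_unbiased_general
    {X : Type*} {Ω : Type*} [MeasurableSpace Ω]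
    (P : Measure Ω)
    (m n : ℕ) (hn : 0 < n)
    (ξ : Fin m → X) (f : X → ℝ)
    (w : Fin m → ℝ) (hw : ∀ i, 0 ≤ w i) (hw1 : ∑ i, w i = 1)
    (Dinv : ℝ → Fin m)
    (hDinv : ∀ (u : ℝ) (i : Fin m),
      u ∈ Set.Ioc (∑ j ∈ Finset.Iio i, w j) (∑ j ∈ Finset.Iic i, w j) → Dinv u = i)
    (U : Ω → ℝ) (hUmeas : Measurable U)
    (hUlaw : Measure.map U P
      = (n : ENNReal) • volume.restrict (Set.Ioc (0 : ℝ) (1 / n))) :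
    ∫ a, ∑ i : Fin n, f (ξ (Dinv (((i : ℕ) : ℝ) / n + U a))) ∂P
      = n * ∑ i, w i * f (ξ i) := by
  have hD : IsInverseCdf w Dinv := hDinv
  have hg : IntervalIntegrable (fun u => f (ξ (Dinv u))) volume 0 1 := by
    simpa [hw1] using hD.intervalIntegrable_comp hw fun i => f (ξ i)
  calc ∫ a, ∑ i : Fin n, f (ξ (Dinv (((i : ℕ) : ℝ) / n + U a))) ∂P
      = ∑ i : Fin n, ∫ a, f (ξ (Dinv (((i : ℕ) : ℝ) / n + U a))) ∂P :=
        integral_finsetSum _ fun i _ =>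
          integrable_comp_const_add_of_map_eq hUmeas.aemeasurable hUlaw (hg.of_div_nat i.isLt)
    _ = n * ∑ k ∈ range n, ∫ u in (k / n : ℝ)..(k / n + 1 / n), f (ξ (Dinv u)) := by
        rw [mul_sum, ← Fin.sum_univ_eq_sum_range]
        exact sum_congr rfl fun i _ =>
          integral_comp_const_add_of_map_eq hUmeas.aemeasurable hUlaw (hg.of_div_nat i.isLt)
    _ = n * ∑ i, w i * f (ξ i) := by
        rw [sum_integral_div_nat hn hg, ← hw1, hD.integral_comp hw fun i => f (ξ i)]
        simp only [smul_eq_mul]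

/-- unbiasedness of systematic resampling.
`U` is a single uniform draw on `(0, 1/n]`, `U^i = (i−1)/n + U`, and indices are selected
through the inverse cdf `Dinv` of the weights; then
`E[∑_i f(ξ_{Dinv(U^i)})] = n ∑_i w i f(ξ i)`. -/
theorem systematic_resampling_unbiased
    {X : Type*} [MeasurableSpace X] {Ω : Type*} [MeasurableSpace Ω]
    (P : Measure Ω) [IsProbabilityMeasure P]
    (m n : ℕ) (hm : 0 < m) (hn : 0 < n)
    (ξ : Fin m → X) (f : X → ℝ) (hf : Measurable f) (hfb : ∃ C, ∀ x, |f x| ≤ C)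
    (w : Fin m → ℝ) (hw : ∀ i, 0 ≤ w i) (hw1 : ∑ i, w i = 1)
    (Dinv : ℝ → Fin m) (hDmeas : Measurable Dinv)
    (hDinv : ∀ (u : ℝ) (i : Fin m),
      u ∈ Set.Ioc (∑ j ∈ Finset.Iio i, w j) (∑ j ∈ Finset.Iic i, w j) → Dinv u = i)
    (U : Ω → ℝ) (hUmeas : Measurable U)
    (hUlaw : Measure.map U P
      = (n : ENNReal) • volume.restrict (Set.Ioc (0 : ℝ) (1 / n))) :
    ∫ a, ∑ i : Fin n, f (ξ (Dinv (((i : ℕ) : ℝ) / n + U a))) ∂P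
      = n * ∑ i, w i * f (ξ i) :=
  systematic_resampling_unbiased_general P m n hn ξ f w hw hw1 Dinv hDinv U hUmeas hUlaw
end

section
/- Consider the interleaved two-value configuration: n is an even positive integer, x_0 and x_1 are two points, the n particles are ξ_i = x_0 for odd i and ξ_i = x_1 for even i, with weights ω_i = 2(1−ω)/n for odd i and ω_i = 2ω/n for even i, where 1/2 ≤ ω < 1, and f is a real-valued function on {x_0, x_1}. Let D_ω^inv(u) = i for u ∈ ( Σ_{j=1}^{i−1} ω_j , Σ_{j=1}^{i} ω_j ], and let U^1,…,U^n be independent with U^i uniform on ((i−1)/n, i/n] (stratified resampling). Then Var[ (1/n) Σ_{i=1}^n f(ξ_{D_ω^inv(U^i)}) ] = (1/n) (2ω − 1)(1 − ω) (f(x_1) − f(x_0))². -/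
/-!
With `g = f ∘ ξ ∘ Dinv`, the estimator is `(1/n) ∑ g(Uⁱ)` with independent `Uⁱ`, so its variance
is `(1/n²) ∑ Var g(Uⁱ)`. The cumulative weights at even (0-based) indices are the stratum
boundaries `k/n`. Hence on a stratum with odd index `g ≡ f x1`, while a stratum with even index
splits at distance `2(1-ω)/n` from its left end into a piece where `g = f x0` and one where
`g = f x1`; there `g(Uⁱ)` is a two-point variable of variance `2(1-ω)(2ω-1)(f x1 - f x0)²`.
Summing over the `n/2` even strata gives the claim.
-/

open MeasureTheory ProbabilityTheory Filter Finset

lemma sum_range_two_mul_ite_mod_two {M : Type*} [AddCommMonoid M] (a b : M) (j : ℕ) :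
    ∑ m ∈ range (2 * j), (if m % 2 = 0 then a else b) = j • (a + b) := by
  induction j with
  | zero => simp
  | succ j ih =>
    rw [Nat.mul_succ, sum_range_succ, sum_range_succ, ih, succ_nsmul]
    simp [Nat.add_mod, add_assoc]

lemma Fin.sum_Iio_eq_sum_range {M : Type*} [AddCommMonoid M] {n : ℕ} (W : ℕ → M) (i : Fin n) :
    ∑ j ∈ Iio i, W j = ∑ m ∈ range i, W m := by
  rw [← Nat.Iio_eq_range, ← Fin.map_valEmbedding_Iio, sum_map]
  rfl

lemma Fin.sum_Iic_eq_sum_range {M : Type*} [AddCommMonoid M] {n : ℕ} (W : ℕ → M) (i : Fin n) :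
    ∑ j ∈ Iic i, W j = ∑ m ∈ range (i + 1), W m := by
  rw [Nat.range_succ_eq_Iic, ← Fin.map_valEmbedding_Iic, sum_map]
  rfl

section Stratum

variable {Ω : Type*} [MeasurableSpace Ω] {P : Measure Ω}

lemma integral_comp_of_map_eq_smul {E G : Type*} [MeasurableSpace E] [NormedAddCommGroup G]
    [NormedSpace ℝ G] {μ : Measure E} {U : Ω → E} {c : ENNReal} (hU : AEMeasurable U P)
    (hlaw : P.map U = c • μ) {ψ : E → G} (hψ : AEStronglyMeasurable ψ (P.map U)) :
    ∫ ω, ψ (U ω) ∂P = c.toReal • ∫ x, ψ x ∂μ := by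
  rw [← integral_map hU hψ, hlaw, integral_smul_measure]

lemma ae_mem_of_map_eq_smul_restrict {E : Type*} [MeasurableSpace E] {μ : Measure E}
    {U : Ω → E} {c : ENNReal} {s : Set E} (hU : AEMeasurable U P) (hs : MeasurableSet s)
    (hlaw : P.map U = c • μ.restrict s) : ∀ᵐ ω ∂P, U ω ∈ s :=
  ae_of_ae_map hU (hlaw ▸ Measure.ae_smul_measure (ae_restrict_mem hs) c)

variable {U : Ω → ℝ} {c : ENNReal} {a t b y₀ y₁ : ℝ} {φ : ℝ → ℝ}

lemma setIntegral_Ioc_of_eqOn (hat : a ≤ t) (htb : t ≤ b)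
    (h₀ : Set.EqOn φ (fun _ => y₀) (Set.Ioc a t)) (h₁ : Set.EqOn φ (fun _ => y₁) (Set.Ioc t b)) :
    ∫ u in Set.Ioc a b, φ u = (t - a) * y₀ + (b - t) * y₁ := by
  have hi₀ : IntegrableOn φ (Set.Ioc a t) :=
    (integrableOn_const (by simp)).congr_fun h₀.symm measurableSet_Ioc
  have hi₁ : IntegrableOn φ (Set.Ioc t b) :=
    (integrableOn_const (by simp)).congr_fun h₁.symm measurableSet_Ioc
  rw [← Set.Ioc_union_Ioc_eq_Ioc hat htb,
    setIntegral_union (Set.Ioc_disjoint_Ioc_of_le le_rfl) measurableSet_Ioc hi₀ hi₁,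
    setIntegral_congr_fun measurableSet_Ioc h₀, setIntegral_congr_fun measurableSet_Ioc h₁]
  simp [hat, htb]

lemma memLp_comp_of_eqOn_Ioc [IsFiniteMeasure P] (hU : Measurable U)
    (hlaw : P.map U = c • volume.restrict (Set.Ioc a b)) (hφ : Measurable φ)
    (h₀ : Set.EqOn φ (fun _ => y₀) (Set.Ioc a t)) (h₁ : Set.EqOn φ (fun _ => y₁) (Set.Ioc t b))
    (p : ENNReal) : MemLp (φ ∘ U) p P := by
  refine MemLp.of_bound (hφ.comp hU).aestronglyMeasurable (max |y₀| |y₁|) ?_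
  filter_upwards [ae_mem_of_map_eq_smul_restrict hU.aemeasurable measurableSet_Ioc hlaw]
    with ω ⟨hau, hub⟩
  rcases le_or_gt (U ω) t with hut | htu
  · simp [h₀ ⟨hau, hut⟩]
  · simp [h₁ ⟨htu, hub⟩]

lemma variance_comp_of_eqOn_Ioc [IsProbabilityMeasure P] (hU : Measurable U)
    (hlaw : P.map U = c • volume.restrict (Set.Ioc a b)) (hφ : Measurable φ)
    (hat : a ≤ t) (htb : t ≤ b)
    (h₀ : Set.EqOn φ (fun _ => y₀) (Set.Ioc a t)) (h₁ : Set.EqOn φ (fun _ => y₁) (Set.Ioc t b)) :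
    variance (φ ∘ U) P = c.toReal ^ 2 * (t - a) * (b - t) * (y₁ - y₀) ^ 2 := by
  have hint (ψ : ℝ → ℝ) (hψ : Measurable ψ) :
      ∫ ω, ψ (U ω) ∂P = c.toReal * ∫ u in Set.Ioc a b, ψ u :=
    integral_comp_of_map_eq_smul hU.aemeasurable hlaw hψ.aestronglyMeasurable
  have hmass : c.toReal * (b - a) = 1 := by
    simpa [hat.trans htb] using (hint (fun _ => 1) measurable_const).symm
  have hsq₀ : Set.EqOn (fun u => φ u ^ 2) (fun _ => y₀ ^ 2) (Set.Ioc a t) :=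
    fun u hu => by simp [h₀ hu]
  have hsq₁ : Set.EqOn (fun u => φ u ^ 2) (fun _ => y₁ ^ 2) (Set.Ioc t b) :=
    fun u hu => by simp [h₁ hu]
  rw [variance_eq_sub (memLp_comp_of_eqOn_Ioc hU hlaw hφ h₀ h₁ 2)]
  simp only [Pi.pow_apply, Function.comp_apply]
  rw [hint _ (hφ.pow_const 2), hint _ hφ, setIntegral_Ioc_of_eqOn hat htb h₀ h₁,
    setIntegral_Ioc_of_eqOn hat htb hsq₀ hsq₁]
  linear_combination (-(c.toReal * ((t - a) * y₀ ^ 2 + (b - t) * y₁ ^ 2))) * hmass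

end Stratum

noncomputable def interleavedWeight (n : ℕ) (ω : ℝ) (m : ℕ) : ℝ :=
  if m % 2 = 0 then 2 * (1 - ω) / n else 2 * ω / n

noncomputable def stratumSplit (n : ℕ) (ω : ℝ) (k : ℕ) : ℝ :=
  if k % 2 = 0 then (k + 2 * (1 - ω)) / n else k / n

section Interleaved

variable {n : ℕ} {ω : ℝ}

lemma sum_range_two_mul_interleavedWeight (j : ℕ) :
    ∑ m ∈ range (2 * j), interleavedWeight n ω m = 2 * j / n := by
  simp only [interleavedWeight]
  rw [sum_range_two_mul_ite_mod_two, nsmul_eq_mul]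
  ring

lemma sum_range_two_mul_add_one_interleavedWeight (j : ℕ) :
    ∑ m ∈ range (2 * j + 1), interleavedWeight n ω m = (2 * j + 2 * (1 - ω)) / n := by
  rw [sum_range_succ, sum_range_two_mul_interleavedWeight]
  simp only [interleavedWeight, Nat.mul_mod_right, ↓reduceIte]
  ring

lemma stratumSplit_mem_Icc (hω₁ : 1 / 2 ≤ ω) (hω₂ : ω ≤ 1) (k : ℕ) :
    stratumSplit n ω k ∈ Set.Icc (k / n : ℝ) ((k + 1) / n) := by
  unfold stratumSplit
  split_ifs <;> constructor <;> gcongr <;> linarith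

lemma natCast_sq_mul_stratumSplit (hn : n ≠ 0) (k : ℕ) :
    (n : ℝ) ^ 2 * (stratumSplit n ω k - k / n) * ((k + 1) / n - stratumSplit n ω k)
      = if k % 2 = 0 then 2 * (1 - ω) * (2 * ω - 1) else 0 := by
  unfold stratumSplit
  split_ifs <;> field_simp <;> ring

end Interleaved

section Selection

variable {n : ℕ} {ω : ℝ} {β : Type*} {ξ : Fin n → β} {y₀ y₁ : β} {w : Fin n → ℝ} {D : ℝ → Fin n}

lemma eq_of_sum_range_interleavedWeight_lt (hw : ∀ i, w i = interleavedWeight n ω i)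
    (hD : ∀ (u : ℝ) (i : Fin n), u ∈ Set.Ioc (∑ j ∈ Iio i, w j) (∑ j ∈ Iic i, w j) → D u = i)
    {u : ℝ} {i : Fin n} {k : ℕ} (hik : (i : ℕ) = k)
    (hlt : ∑ m ∈ range k, interleavedWeight n ω m < u)
    (hle : u ≤ ∑ m ∈ range (k + 1), interleavedWeight n ω m) : D u = i := by
  refine hD u i ⟨?_, ?_⟩
  · simpa only [hw, Fin.sum_Iio_eq_sum_range (interleavedWeight n ω), hik] using hlt
  · simpa only [hw, Fin.sum_Iic_eq_sum_range (interleavedWeight n ω), hik] using hle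

lemma eqOn_stratumSplit_left (hξ : ∀ i, ξ i = if (i : ℕ) % 2 = 0 then y₀ else y₁)
    (hw : ∀ i, w i = interleavedWeight n ω i)
    (hD : ∀ (u : ℝ) (i : Fin n), u ∈ Set.Ioc (∑ j ∈ Iio i, w j) (∑ j ∈ Iic i, w j) → D u = i)
    (i : Fin n) :
    Set.EqOn (ξ ∘ D) (fun _ => y₀) (Set.Ioc ((i : ℕ) / n) (stratumSplit n ω i)) := by
  intro u ⟨hiu, hus⟩
  unfold stratumSplit at hus
  split_ifs at hus with hi
  · obtain ⟨j, hj⟩ : ∃ j, (i : ℕ) = 2 * j := ⟨i / 2, by omega⟩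
    have hDu : D u = i := eq_of_sum_range_interleavedWeight_lt hw hD hj
      (by rwa [sum_range_two_mul_interleavedWeight, ← Nat.cast_two, ← Nat.cast_mul, ← hj])
      (by rwa [sum_range_two_mul_add_one_interleavedWeight, ← Nat.cast_two, ← Nat.cast_mul, ← hj])
    simp [hDu, hξ, hi]
  · exact absurd (hiu.trans_le hus) (lt_irrefl _)

lemma eqOn_stratumSplit_right (hneven : Even n) (hω : 1 / 2 ≤ ω)
    (hξ : ∀ i, ξ i = if (i : ℕ) % 2 = 0 then y₀ else y₁)
    (hw : ∀ i, w i = interleavedWeight n ω i)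
    (hD : ∀ (u : ℝ) (i : Fin n), u ∈ Set.Ioc (∑ j ∈ Iio i, w j) (∑ j ∈ Iic i, w j) → D u = i)
    (i : Fin n) :
    Set.EqOn (ξ ∘ D) (fun _ => y₁) (Set.Ioc (stratumSplit n ω i) (((i : ℕ) + 1) / n)) := by
  intro u ⟨hsu, hui⟩
  unfold stratumSplit at hsu
  obtain ⟨j, hj | hj⟩ := Nat.even_or_odd' (i : ℕ)
  · rw [if_pos (by omega)] at hsu
    have hsucc : (i : ℕ) + 1 < n := by obtain ⟨r, hr⟩ := hneven; omega
    have hDu : D u = ⟨i + 1, hsucc⟩ :=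
      eq_of_sum_range_interleavedWeight_lt hw hD (k := 2 * j + 1) (by simp [hj])
      (by rwa [sum_range_two_mul_add_one_interleavedWeight, ← Nat.cast_two, ← Nat.cast_mul, ← hj])
      (by
        rw [show 2 * j + 1 + 1 = 2 * (j + 1) by ring, sum_range_two_mul_interleavedWeight]
        refine hui.trans (div_le_div_of_nonneg_right ?_ n.cast_nonneg)
        push_cast [hj]; linarith)
    simp [hDu, hξ, hj, Nat.add_mod]
  · rw [if_neg (by omega)] at hsu
    have hDu : D u = i := eq_of_sum_range_interleavedWeight_lt hw hD hj
      (by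
        rw [sum_range_two_mul_add_one_interleavedWeight]
        refine lt_of_le_of_lt (div_le_div_of_nonneg_right ?_ n.cast_nonneg) hsu
        push_cast [hj]; linarith)
      (by
        rw [show 2 * j + 1 + 1 = 2 * (j + 1) by ring, sum_range_two_mul_interleavedWeight]
        refine hui.trans_eq ?_
        push_cast [hj]; ring)
    simp [hDu, hξ, hj, Nat.add_mod]

end Selection

theorem stratified_variance_interleaved_general
    {X : Type*} {Ω : Type*} [MeasurableSpace Ω]
    (P : Measure Ω) [IsProbabilityMeasure P]
    (n : ℕ) (hneven : Even n)
    (x0 x1 : X) (f : X → ℝ)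
    (ω : ℝ) (hω1 : 1 / 2 ≤ ω) (hω2 : ω < 1)
    (ξ : Fin n → X) (hξ : ∀ i, ξ i = if (i : ℕ) % 2 = 0 then x0 else x1)
    (w : Fin n → ℝ)
    (hwdef : ∀ i, w i = if (i : ℕ) % 2 = 0 then 2 * (1 - ω) / n else 2 * ω / n)
    (Dinv : ℝ → Fin n) (hDmeas : Measurable Dinv)
    (hDinv : ∀ (u : ℝ) (i : Fin n),
      u ∈ Set.Ioc (∑ j ∈ Finset.Iio i, w j) (∑ j ∈ Finset.Iic i, w j) → Dinv u = i)
    (U : Fin n → Ω → ℝ) (hUmeas : ∀ i, Measurable (U i))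
    (hUindep : iIndepFun U P)
    (hUlaw : ∀ i : Fin n, Measure.map (U i) P
      = (n : ENNReal) • volume.restrict (Set.Ioc (((i : ℕ) : ℝ) / n) (((i : ℕ) + 1 : ℝ) / n))) :
    variance (fun a => (1 / (n : ℝ)) * ∑ i : Fin n, f (ξ (Dinv (U i a)))) P
      = (1 / (n : ℝ)) * (2 * ω - 1) * (1 - ω) * (f x1 - f x0) ^ 2 := by
  set g : ℝ → ℝ := f ∘ ξ ∘ Dinv
  have hg : Measurable g := (measurable_of_finite (f ∘ ξ)).comp hDmeas
  have hg₀ i := (eqOn_stratumSplit_left hξ hwdef hDinv i).comp_left (g := f)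
  have hg₁ i := (eqOn_stratumSplit_right hneven hω1 hξ hwdef hDinv i).comp_left (g := f)
  have hvar (i : Fin n) : variance (g ∘ U i) P
      = (if (i : ℕ) % 2 = 0 then 2 * (1 - ω) * (2 * ω - 1) else 0) * (f x1 - f x0) ^ 2 := by
    obtain ⟨hsplit₀, hsplit₁⟩ := stratumSplit_mem_Icc hω1 hω2.le (n := n) i
    rw [variance_comp_of_eqOn_Ioc (hUmeas i) (hUlaw i) hg hsplit₀ hsplit₁ (hg₀ i) (hg₁ i),
      ENNReal.toReal_natCast, natCast_sq_mul_stratumSplit (Fin.pos i).ne']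
  have hsum : variance (∑ i, g ∘ U i) P = ∑ i, variance (g ∘ U i) P :=
    IndepFun.variance_sum
      (fun i _ => memLp_comp_of_eqOn_Ioc (hUmeas i) (hUlaw i) hg (hg₀ i) (hg₁ i) 2)
      fun i _ j _ hij => (hUindep.comp (fun _ => g) fun _ => hg).indepFun hij
  obtain ⟨m, rfl⟩ := hneven
  calc variance (fun a => (1 / ((m + m : ℕ) : ℝ)) * ∑ i : Fin (m + m), f (ξ (Dinv (U i a)))) P
      = (1 / ((m + m : ℕ) : ℝ)) ^ 2 * ∑ i, variance (g ∘ U i) P := by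
        rw [← hsum, ← variance_smul]
        congr 1
        ext a
        simp [g]
    _ = (1 / ((m + m : ℕ) : ℝ)) ^ 2 * (m * (2 * (1 - ω) * (2 * ω - 1))) * (f x1 - f x0) ^ 2 := by
        rw [sum_congr rfl fun i _ => hvar i, ← sum_mul,
          Fin.sum_univ_eq_sum_range (fun k => if k % 2 = 0 then 2 * (1 - ω) * (2 * ω - 1) else 0),
          ← two_mul, sum_range_two_mul_ite_mod_two, add_zero, nsmul_eq_mul]
        ring
    _ = _ := by
        push_cast
        obtain rfl | hm := eq_or_ne m 0
        · simp
        · field_simp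
          ring

/-- stratified resampling in the interleaved two-value configuration.
Particles with 0-based index `i` are `x0` for `i` even (paper's odd 1-based indices) and
`x1` for `i` odd, carrying weights `2(1−ω)/n` and `2ω/n` respectively, `1/2 ≤ ω < 1`.
For stratified resampling, `Var[(1/n) ∑_i f(ξ_{Dinv(U i)})]
  = (1/n)(2ω − 1)(1 − ω)(f(x1) − f(x0))²`. -/
theorem stratified_variance_interleaved
    {X : Type*} [MeasurableSpace X] {Ω : Type*} [MeasurableSpace Ω]
    (P : Measure Ω) [IsProbabilityMeasure P]
    (n : ℕ) (hn : 0 < n) (hneven : Even n)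
    (x0 x1 : X) (f : X → ℝ)
    (ω : ℝ) (hω1 : 1 / 2 ≤ ω) (hω2 : ω < 1)
    (ξ : Fin n → X) (hξ : ∀ i, ξ i = if (i : ℕ) % 2 = 0 then x0 else x1)
    (w : Fin n → ℝ)
    (hwdef : ∀ i, w i = if (i : ℕ) % 2 = 0 then 2 * (1 - ω) / n else 2 * ω / n)
    (Dinv : ℝ → Fin n) (hDmeas : Measurable Dinv)
    (hDinv : ∀ (u : ℝ) (i : Fin n),
      u ∈ Set.Ioc (∑ j ∈ Finset.Iio i, w j) (∑ j ∈ Finset.Iic i, w j) → Dinv u = i)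
    (U : Fin n → Ω → ℝ) (hUmeas : ∀ i, Measurable (U i))
    (hUindep : iIndepFun U P)
    (hUlaw : ∀ i : Fin n, Measure.map (U i) P
      = (n : ENNReal) • volume.restrict (Set.Ioc (((i : ℕ) : ℝ) / n) (((i : ℕ) + 1 : ℝ) / n))) :
    variance (fun a => (1 / (n : ℝ)) * ∑ i : Fin n, f (ξ (Dinv (U i a)))) P
      = (1 / (n : ℝ)) * (2 * ω - 1) * (1 - ω) * (f x1 - f x0) ^ 2 :=
  stratified_variance_interleaved_general P n hneven x0 x1 f ω hω1 hω2 ξ hξ w hwdef Dinv hDmeas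
    hDinv U hUmeas hUindep hUlaw
end

section
/- (Lemma 1.) Let X be a measurable space with σ-finite reference measure λ, ν and μ probability densities on X with g = μ/ν bounded from above. For each m, let ξ^{m,1},…,ξ^{m,m} be X-valued random variables such that for every bounded measurable h, (1/m) Σ_{i=1}^m h(ξ^{m,i}) → ν(h) in probability, and set ω^{m,i} = g(ξ^{m,i}) / Σ_{j=1}^m g(ξ^{m,j}). Let n = n(m) → ∞ with n/m → α ∈ (0,∞), and assume the support condition μ( { x : α g(x) ∈ ℕ } ) = 0, i.e. ∫ 1_{ { x : α μ(x)/ν(x) ∈ ℕ } }(x) μ(x) λ(dx) = 0. Then for every bounded measurable f : X → ℝ, Σ_{i=1}^m (⌊n ω^{m,i}⌋ / n) f(ξ^{m,i}) → ∫ (1/α) ⌊α g(x)⌋ f(x) ν(x) λ(dx) in probability as m → ∞. -/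
open MeasureTheory Filter Finset Metric Set
open scoped Topology

/-!
Write `g = μ/ν` and `β = n / ∑ⱼ g(ξʲ)`, so that `n ω^{i} = β g(ξⁱ)`. By the law of large numbers
applied to `g` (and `ν(g) = 1`), `β → α` in probability. The floors `⌊β g⌋` and `⌊α g⌋` differ only
where `α g` lies within `η = |β - α| sup g` of a positive integer, and then by at most `η + 1`.
Hence the sum is `(m/n) (1/m) ∑ ⌊α g(ξⁱ)⌋ f(ξⁱ)`, which tends to `ν(⌊α g⌋ f)/α`, up to an error
controlled by the empirical frequency of the `η`-neighbourhood of the positive integers under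
`α g`. That frequency tends to its `ν`-mass, which vanishes as `η → 0` because the support
condition makes `{α g ∈ ℤ_{>0}}` a `λ`-null set.
-/

namespace MeasureTheory

variable {ι Ω E F : Type*} [MeasurableSpace Ω] {P : Measure Ω} {l : Filter ι}

theorem TendstoInMeasure.prodMk [PseudoEMetricSpace E] [PseudoEMetricSpace F]
    {f : ι → Ω → E} {g : Ω → E} {f' : ι → Ω → F} {g' : Ω → F}
    (h : TendstoInMeasure P f l g) (h' : TendstoInMeasure P f' l g') :
    TendstoInMeasure P (fun i a => (f i a, f' i a)) l (fun a => (g a, g' a)) := by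
  intro ε hε
  refine tendsto_of_tendsto_of_tendsto_of_le_of_le tendsto_const_nhds
    (by simpa using (h ε hε).add (h' ε hε)) (fun _ => zero_le) fun i => ?_
  refine (measure_mono fun a ha => ?_).trans (measure_union_le _ _)
  simpa [Prod.edist_eq, le_max_iff] using ha

theorem _root_.Filter.Tendsto.tendstoInMeasure_const [PseudoEMetricSpace E] {r : ι → E} {c : E}
    (h : Tendsto r l (𝓝 c)) : TendstoInMeasure P (fun i _ => r i) l (fun _ => c) := by
  intro ε hε
  refine tendsto_const_nhds.congr' ?_
  filter_upwards [EMetric.tendsto_nhds.1 h ε hε] with i hi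
  simp [not_le.2 hi]

theorem TendstoInMeasure.tendsto_measure_le_dist_of_forall_mem [PseudoMetricSpace E]
    [PseudoMetricSpace F] {Y : ι → Ω → E} {y : E} {Z : ι → Ω → F} {z : F} {ε : ℝ}
    (hY : TendstoInMeasure P Y l (fun _ => y)) {U : Set E} (hU : U ∈ 𝓝 y)
    (hZ : ∀ᶠ i in l, ∀ a, Y i a ∈ U → dist (Z i a) z < ε) :
    Tendsto (fun i => P {a | ε ≤ dist (Z i a) z}) l (𝓝 0) := by
  obtain ⟨δ, hδ, hball⟩ := Metric.mem_nhds_iff.1 hU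
  refine tendsto_of_tendsto_of_tendsto_of_le_of_le' tendsto_const_nhds
    (tendstoInMeasure_iff_dist.1 hY δ hδ) (Eventually.of_forall fun _ => zero_le) ?_
  filter_upwards [hZ] with i hi
  refine measure_mono fun a ha => ?_
  by_contra hfar
  exact (not_lt.2 ha) (hi a (hball (mem_ball.2 (not_le.1 hfar))))

end MeasureTheory

def posInts : Set ℝ := Int.cast '' Ici 1

theorem isClosed_posInts : IsClosed posInts :=
  Int.isClosedEmbedding_coe_real.isClosedMap _ (isClosed_discrete _)

theorem mul_div_notMem_posInts {α a b : ℝ} (h : (∃ k : ℕ, α * (a / b) = k) → a = 0) :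
    α * (a / b) ∉ posInts := by
  rintro ⟨z, hz, hαz⟩
  lift z to ℕ using le_trans zero_le_one (Set.mem_Ici.1 hz)
  have ha : a = 0 := h ⟨z, by simpa using hαz.symm⟩
  simp only [ha, zero_div, mul_zero, Int.cast_natCast, Nat.cast_eq_zero] at hαz
  simp [hαz] at hz

theorem exists_posInts_mem_uIcc_of_floor_lt {u v : ℝ} (hu : 0 ≤ u) (h : ⌊u⌋ < ⌊v⌋) :
    ∃ k ∈ posInts, k ∈ uIcc u v := by
  have : 0 ≤ ⌊u⌋ := Int.floor_nonneg.2 hu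
  exact ⟨⌊v⌋, ⟨⌊v⌋, by simp only [Set.mem_Ici]; omega, rfl⟩,
    Icc_subset_uIcc ⟨(Int.floor_lt.1 h).le, Int.floor_le v⟩⟩

theorem mem_cthickening_posInts_of_floor_ne {u v : ℝ} (hu : 0 ≤ u) (hv : 0 ≤ v)
    (h : ⌊u⌋ ≠ ⌊v⌋) : v ∈ cthickening |u - v| posInts := by
  rcases h.lt_or_gt with h | h
  · obtain ⟨k, hk, hkuv⟩ := exists_posInts_mem_uIcc_of_floor_lt hu h
    refine mem_cthickening_of_dist_le v k _ _ hk ?_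
    rw [Real.dist_eq, abs_sub_comm u]
    exact abs_sub_right_of_mem_uIcc hkuv
  · obtain ⟨k, hk, hkuv⟩ := exists_posInts_mem_uIcc_of_floor_lt hv h
    refine mem_cthickening_of_dist_le v k _ _ hk ?_
    rw [Real.dist_eq, abs_sub_comm v]
    exact abs_sub_left_of_mem_uIcc hkuv

theorem abs_floor_sub_floor_le_indicator {u v η : ℝ} (hu : 0 ≤ u) (hv : 0 ≤ v)
    (huv : |u - v| ≤ η) :
    |(⌊u⌋ : ℝ) - ⌊v⌋| ≤ (η + 1) * (cthickening η posInts).indicator 1 v := by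
  by_cases h : ⌊u⌋ = ⌊v⌋
  · rw [h, sub_self, abs_zero]
    exact mul_nonneg (by linarith [abs_nonneg (u - v)]) (indicator_nonneg (by simp) _)
  · rw [indicator_of_mem (cthickening_mono huv _ (mem_cthickening_posInts_of_floor_ne hu hv h)),
      Pi.one_apply, mul_one, abs_sub_le_iff]
    constructor <;> linarith [Int.floor_le u, Int.lt_floor_add_one u, Int.floor_le v,
      Int.lt_floor_add_one v, abs_le.1 huv]

theorem abs_floor_mul_mul_le {α t C s Cs : ℝ} (hα : 0 ≤ α) (ht : 0 ≤ t) (htC : t ≤ C)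
    (hs : |s| ≤ Cs) : |(⌊α * t⌋ : ℝ) * s| ≤ α * C * Cs := by
  rw [abs_mul, abs_of_nonneg (Int.cast_nonneg (Int.floor_nonneg.2 (mul_nonneg hα ht)))]
  exact mul_le_mul ((Int.floor_le _).trans (by gcongr)) hs (abs_nonneg _)
    (mul_nonneg hα (ht.trans htC))

theorem abs_sum_floor_mul_sub_sum_floor_mul_le {ι : Type*} [Fintype ι] {β α η Cf : ℝ}
    {t f : ι → ℝ} (hβ : 0 ≤ β) (hα : 0 ≤ α) (ht : ∀ i, 0 ≤ t i) (hη : ∀ i, |β - α| * t i ≤ η)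
    (hf : ∀ i, |f i| ≤ Cf) :
    |∑ i, (⌊β * t i⌋ : ℝ) * f i - ∑ i, (⌊α * t i⌋ : ℝ) * f i| ≤
      (η + 1) * Cf * ∑ i, (cthickening η posInts).indicator 1 (α * t i) := by
  rw [← sum_sub_distrib, mul_sum]
  refine (abs_sum_le_sum_abs _ _).trans (sum_le_sum fun i _ => ?_)
  have hfloor := abs_floor_sub_floor_le_indicator (η := η) (mul_nonneg hβ (ht i))
    (mul_nonneg hα (ht i)) (by rw [← sub_mul, abs_mul, abs_of_nonneg (ht i)]; exact hη i)
  rw [← sub_mul, abs_mul, mul_right_comm]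
  exact mul_le_mul hfloor (hf i) (abs_nonneg _) ((abs_nonneg _).trans hfloor)

theorem abs_sum_floor_div_mul_sub_le {m : ℕ} (hm : m ≠ 0) (n : ℕ) {α C Cf η L : ℝ}
    (hα : 0 ≤ α) {t f : Fin m → ℝ} (ht : ∀ i, 0 ≤ t i) (htC : ∀ i, t i ≤ C)
    (hf : ∀ i, |f i| ≤ Cf) (hβ : |(n / m : ℝ) / (1 / m * ∑ i, t i) - α| * C ≤ η) :
    |∑ i, ((⌊(n : ℝ) * (t i / ∑ j, t j)⌋ : ℝ) / n) * f i - L| ≤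
      |(1 / m * ∑ i, (⌊α * t i⌋ : ℝ) * f i) / (n / m) - L| +
        (η + 1) * Cf * (1 / m * ∑ i, (cthickening η posInts).indicator 1 (α * t i)) / (n / m) := by
  have hm' : (m : ℝ) ≠ 0 := Nat.cast_ne_zero.2 hm
  have hβ_eq : (n / m : ℝ) / (1 / m * ∑ i, t i) = n / ∑ i, t i := by field_simp
  rw [hβ_eq] at hβ
  have hfloor := abs_sum_floor_mul_sub_sum_floor_mul_le
    (div_nonneg n.cast_nonneg (sum_nonneg fun i _ => ht i)) hα ht
    (fun i => (mul_le_mul_of_nonneg_left (htC i) (abs_nonneg _)).trans hβ) hf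
  have hZ : ∑ i, ((⌊(n : ℝ) * (t i / ∑ j, t j)⌋ : ℝ) / n) * f i =
      1 / n * ∑ i, (⌊(n / ∑ j, t j) * t i⌋ : ℝ) * f i := by
    rw [mul_sum]
    refine sum_congr rfl fun i _ => ?_
    rw [mul_div_assoc', mul_div_right_comm]
    ring
  have hH : (1 / m * ∑ i, (⌊α * t i⌋ : ℝ) * f i) / (n / m) =
      1 / n * ∑ i, (⌊α * t i⌋ : ℝ) * f i := by
    field_simp
  have hI : (η + 1) * Cf * (1 / m * ∑ i, (cthickening η posInts).indicator 1 (α * t i)) / (n / m)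
      = 1 / n * ((η + 1) * Cf * ∑ i, (cthickening η posInts).indicator 1 (α * t i)) := by
    field_simp
  rw [hZ, hH, hI]
  calc _ = |(1 / n * ∑ i, (⌊α * t i⌋ : ℝ) * f i - L) + 1 / n *
        (∑ i, (⌊(n / ∑ j, t j) * t i⌋ : ℝ) * f i - ∑ i, (⌊α * t i⌋ : ℝ) * f i)| := by ring_nf
    _ ≤ _ := by
      grw [abs_add_le, abs_mul, abs_of_nonneg (by positivity : (0 : ℝ) ≤ 1 / n), hfloor]

section Density

variable {X : Type*} [MeasurableSpace X] {lam : Measure X}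

theorem tendsto_integral_indicator_cthickening_comp_mul {E : Type*} [PseudoMetricSpace E]
    [MeasurableSpace E] [OpensMeasurableSpace E] {s : Set E} (hs : IsClosed s) {φ : X → E}
    (hφ : Measurable φ) {w : X → ℝ} (hw : Integrable w lam) (hae : ∀ᵐ x ∂lam, φ x ∉ s) :
    Tendsto (fun η => ∫ x, (cthickening η s).indicator 1 (φ x) * w x ∂lam) (𝓝 0) (𝓝 0) := by
  simpa using tendsto_integral_filter_of_dominated_convergence
    (F := fun η x => (cthickening η s).indicator 1 (φ x) * w x) (f := fun _ => 0) (fun x => ‖w x‖)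
    (Eventually.of_forall fun η => (((measurable_one.indicator
      isClosed_cthickening.measurableSet).comp hφ).aestronglyMeasurable.mul
      hw.aestronglyMeasurable))
    (Eventually.of_forall fun η => Eventually.of_forall fun x => by
      rw [norm_mul]
      exact mul_le_of_le_one_left (norm_nonneg _) (by
        by_cases h : φ x ∈ cthickening η s <;> simp [h]))
    hw.norm
    (by
      filter_upwards [hae] with x hx
      refine tendsto_const_nhds.congr' ?_
      filter_upwards [eventually_notMem_cthickening_of_infEDist_pos (hs.closure_eq ▸ hx)]
        with η hη
      simp [hη])

theorem ae_imp_eq_zero_of_setIntegral_eq_zero {f : X → ℝ} {s : Set X} (hs : MeasurableSet s)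
    (hf0 : 0 ≤ᵐ[lam.restrict s] f) (hf : IntegrableOn f s lam) (h : ∫ x in s, f x ∂lam = 0) :
    ∀ᵐ x ∂lam, x ∈ s → f x = 0 :=
  (ae_restrict_iff' hs).1 ((setIntegral_eq_zero_iff_of_nonneg_ae hf0 hf).1 h)

theorem integral_div_mul_eq_integral {mu nu : X → ℝ} (h : ∀ᵐ x ∂lam, nu x = 0 → mu x = 0) :
    ∫ x, mu x / nu x * nu x ∂lam = ∫ x, mu x ∂lam := by
  refine integral_congr_ae ?_
  filter_upwards [h] with x hx
  by_cases h0 : nu x = 0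
  · simp [h0, hx h0]
  · exact div_mul_cancel₀ _ h0

end Density

theorem residual_floor_sum_limit_general
    {X : Type*} [MeasurableSpace X] (lam : Measure X)
    {Ω : Type*} [MeasurableSpace Ω] (P : Measure Ω)
    (nu mu : X → ℝ) (hnu_meas : Measurable nu) (hmu_meas : Measurable mu)
    (hnu_nonneg : ∀ x, 0 ≤ nu x) (hmu_nonneg : ∀ x, 0 ≤ mu x)
    (hnu_int : ∫ x, nu x ∂lam = 1) (hmu_int : ∫ x, mu x ∂lam = 1)
    (hg_bdd : ∃ C, ∀ x, mu x / nu x ≤ C)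
    (ξ : (m : ℕ) → Fin m → Ω → X)
    (hLLN : ∀ h : X → ℝ, Measurable h → (∃ C, ∀ x, |h x| ≤ C) →
      TendstoInMeasure P (fun (m : ℕ) (a : Ω) => (1 / (m : ℝ)) * ∑ i, h (ξ m i a)) atTop
        (fun _ => ∫ x, h x * nu x ∂lam))
    (n : ℕ → ℕ)
    (α : ℝ) (hα : 0 < α)
    (hnm : Tendsto (fun m : ℕ => (n m : ℝ) / m) atTop (nhds α))
    (hsupport : ∫ x in {x | ∃ k : ℕ, α * (mu x / nu x) = (k : ℝ)}, mu x ∂lam = 0)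
    (f : X → ℝ) (hf : Measurable f) (hfb : ∃ C, ∀ x, |f x| ≤ C) :
    TendstoInMeasure P
      (fun (m : ℕ) (a : Ω) => ∑ i,
        ((⌊(n m : ℝ) * (mu (ξ m i a) / nu (ξ m i a)
            / ∑ j, mu (ξ m j a) / nu (ξ m j a))⌋ : ℝ) / (n m : ℝ)) * f (ξ m i a)) atTop
      (fun _ => ∫ x, (1 / α) * (⌊α * (mu x / nu x)⌋ : ℝ) * f x * nu x ∂lam) := by
  obtain ⟨C, hC⟩ := hg_bdd
  obtain ⟨Cf, hCf⟩ := hfb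
  have hg0 : ∀ x, 0 ≤ mu x / nu x := fun x => div_nonneg (hmu_nonneg x) (hnu_nonneg x)
  have hnull : ∀ᵐ x ∂lam, (∃ k : ℕ, α * (mu x / nu x) = k) → mu x = 0 :=
    ae_imp_eq_zero_of_setIntegral_eq_zero (s := {x | ∃ k : ℕ, α * (mu x / nu x) = k})
      (by measurability) (ae_of_all _ hmu_nonneg)
      (Integrable.of_integral_ne_zero (by simp [hmu_int])).integrableOn hsupport
  have hG := hLLN _ (by fun_prop) ⟨C, fun x => (abs_of_nonneg (hg0 x)).le.trans (hC x)⟩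
  -- where `ν` vanishes, `μ/ν = 0` (division by zero), so the point lies in the support set
  rw [integral_div_mul_eq_integral (hnull.mono fun x hx h0 => hx ⟨0, by simp [h0]⟩),
    hmu_int] at hG
  have hH := hLLN (fun x => (⌊α * (mu x / nu x)⌋ : ℝ) * f x) (by fun_prop)
    ⟨α * C * Cf, fun x => abs_floor_mul_mul_le hα.le (hg0 x) (hC x) (hCf x)⟩
  set L := ∫ x, (⌊α * (mu x / nu x)⌋ : ℝ) * f x * nu x ∂lam
  have hlim : ∫ x, (1 / α) * (⌊α * (mu x / nu x)⌋ : ℝ) * f x * nu x ∂lam = L / α := by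
    rw [← integral_div]; congr with x; ring
  rw [hlim, tendstoInMeasure_iff_dist]
  intro ε hε
  obtain ⟨η, hηε, hη⟩ : ∃ η, (η + 1) * Cf *
      (∫ x, (cthickening η posInts).indicator 1 (α * (mu x / nu x)) * nu x ∂lam) / α < ε ∧
        0 < η := by
    have hI := tendsto_integral_indicator_cthickening_comp_mul isClosed_posInts (by fun_prop)
      (w := nu) (.of_integral_ne_zero (by simp [hnu_int]))
      (hnull.mono fun x => mul_div_notMem_posInts)
    have := (((tendsto_id.add_const 1).mul_const Cf).mul hI).div_const α
    simp only [id, zero_add, mul_zero, zero_div] at this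
    exact (((this.eventually (gt_mem_nhds hε)).filter_mono nhdsWithin_le_nhds).and
      (self_mem_nhdsWithin (s := Ioi 0))).exists
  have hI := hLLN (fun x => (cthickening η posInts).indicator 1 (α * (mu x / nu x)))
    ((measurable_one.indicator isClosed_cthickening.measurableSet).comp (by fun_prop))
    ⟨1, fun x => by by_cases h : α * (mu x / nu x) ∈ cthickening η posInts <;> simp [h]⟩
  refine (hnm.tendstoInMeasure_const.prodMk (hG.prodMk (hH.prodMk hI))
    ).tendsto_measure_le_dist_of_forall_mem (U := {p | |p.1 / p.2.1 - α| * C < η ∧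
      |p.2.2.1 / p.1 - L / α| + (η + 1) * Cf * p.2.2.2 / p.1 < ε}) ?_ ?_
  · refine (ContinuousAt.eventually_lt (by fun_prop (disch := norm_num)) continuousAt_const ?_).and
      (ContinuousAt.eventually_lt (by fun_prop (disch := exact hα.ne')) continuousAt_const ?_)
    · simpa using hη
    · simpa using hηε
  · filter_upwards [eventually_ne_atTop 0] with m hm a ⟨hβ, hclose⟩
    rw [Real.dist_eq]
    exact (abs_sum_floor_div_mul_sub_le hm (n m) hα.le (fun i => hg0 _) (fun i => hC _)
      (fun i => hCf _) hβ.le).trans_lt hclose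

/-- Lemma 1: limit of sums involving the integer parts `⌊n ω^{m,i}⌋`
appearing in residual resampling.  Under the support condition
`μ({x : α g(x) ∈ ℕ}) = 0` (with `g = μ/ν` bounded) and `n/m → α`,
`∑_i (⌊n ω^{m,i}⌋/n) f(ξ^{m,i}) → ν{(1/α)⌊α μ/ν⌋ f}` in probability. -/
theorem residual_floor_sum_limit
    {X : Type*} [MeasurableSpace X] (lam : Measure X) [SigmaFinite lam]
    {Ω : Type*} [MeasurableSpace Ω] (P : Measure Ω) [IsProbabilityMeasure P]
    (nu mu : X → ℝ) (hnu_meas : Measurable nu) (hmu_meas : Measurable mu)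
    (hnu_nonneg : ∀ x, 0 ≤ nu x) (hmu_nonneg : ∀ x, 0 ≤ mu x)
    (hnu_int : ∫ x, nu x ∂lam = 1) (hmu_int : ∫ x, mu x ∂lam = 1)
    (hg_bdd : ∃ C, ∀ x, mu x / nu x ≤ C)
    (ξ : (m : ℕ) → Fin m → Ω → X) (hξ : ∀ m i, Measurable (ξ m i))
    (hLLN : ∀ h : X → ℝ, Measurable h → (∃ C, ∀ x, |h x| ≤ C) →
      TendstoInMeasure P (fun (m : ℕ) (a : Ω) => (1 / (m : ℝ)) * ∑ i, h (ξ m i a)) atTop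
        (fun _ => ∫ x, h x * nu x ∂lam))
    (n : ℕ → ℕ) (hn : Tendsto n atTop atTop)
    (α : ℝ) (hα : 0 < α)
    (hnm : Tendsto (fun m : ℕ => (n m : ℝ) / m) atTop (nhds α))
    (hsupport : ∫ x in {x | ∃ k : ℕ, α * (mu x / nu x) = (k : ℝ)}, mu x ∂lam = 0)
    (f : X → ℝ) (hf : Measurable f) (hfb : ∃ C, ∀ x, |f x| ≤ C) :
    TendstoInMeasure P
      (fun (m : ℕ) (a : Ω) => ∑ i,
        ((⌊(n m : ℝ) * (mu (ξ m i a) / nu (ξ m i a)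
            / ∑ j, mu (ξ m j a) / nu (ξ m j a))⌋ : ℝ) / (n m : ℝ)) * f (ξ m i a)) atTop
      (fun _ => ∫ x, (1 / α) * (⌊α * (mu x / nu x)⌋ : ℝ) * f x * nu x ∂lam) :=
  residual_floor_sum_limit_general lam P nu mu hnu_meas hmu_meas hnu_nonneg hmu_nonneg hnu_int
    hmu_int hg_bdd ξ hLLN n α hα hnm hsupport f hf hfb
end
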